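/- arXiv:2406.16705 — 7 statements merged into one kernel-verified Lean document; each statement's English description precedes it below -/
import Mathlib

section
/- Let n ≥ 4 and let K̃_n be the graph obtained from the complete bipartite graph K_{n,n} with parts {1,...,n} and {1',...,n'} by deleting all edges jj' for j in {1,...,n}. Then every 1-cycle in K̃_n is a symmetric-difference sum of finitely many edge sets of simple cycles of length 4. -/
/-!
Edges of `K̃_n` are the off-diagonal cells `(i, j)` of an `n × n` grid, a 1-cycle is a set of such
cells meeting every row and every column in an even number of cells, and the edge set of a 4-cycle
is a rectangle `{a, a'} × {b, b'}` avoiding the diagonal. The cells in row `0`, in column `0`, and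
the cell `(1, 2)` form a spanning tree. Every other off-diagonal cell is a corner of such a
rectangle whose three other corners have smaller `treeRank` (for the cell `(2, 1)` this needs a
fourth index), so adding rectangles reduces a 1-cycle to one supported on the tree, and a 1-cycle
supported on a tree is empty.
-/

/-- A 1-cycle in a simple graph `G` is a set `C` of edges of `G` such that every
vertex is incident to an even number of edges of `C`. -/
def IsOneCycle {V : Type*} [DecidableEq V] (G : SimpleGraph V) (C : Finset (Sym2 V)) : Prop :=
  (∀ e ∈ C, e ∈ G.edgeSet) ∧ ∀ v : V, Even (C.filter (fun e => v ∈ e)).card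

/-- `s` is the edge set of a simple cycle of length 4 in `G`. -/
def IsQuadCycle {V : Type*} [DecidableEq V] (G : SimpleGraph V) (s : Finset (Sym2 V)) : Prop :=
  ∃ a b c d : V, a ≠ b ∧ a ≠ c ∧ a ≠ d ∧ b ≠ c ∧ b ≠ d ∧ c ≠ d ∧
    G.Adj a b ∧ G.Adj b c ∧ G.Adj c d ∧ G.Adj d a ∧
    s = {s(a, b), s(b, c), s(c, d), s(d, a)}

/-- `K̃_n`: the complete bipartite graph `K_{n,n}` with the perfect matching of
edges `j j'` removed; vertex `Sum.inl i` is adjacent to `Sum.inr j` iff `i ≠ j`. -/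
def tildeK (n : ℕ) : SimpleGraph (Fin n ⊕ Fin n) :=
  SimpleGraph.fromRel (fun a b => ∃ i j : Fin n, i ≠ j ∧ a = Sum.inl i ∧ b = Sum.inr j)

open Finset
open scoped symmDiff

section Span

variable {α : Type*} [DecidableEq α]

theorem Finset.filter_symmDiff (s t : Finset α) (p : α → Prop) [DecidablePred p] :
    (s ∆ t).filter p = s.filter p ∆ t.filter p := by
  ext x; simp only [mem_filter, mem_symmDiff]; tauto

theorem Finset.even_card_symmDiff {s t : Finset α} (hs : Even #s) (ht : Even #t) :
    Even #(s ∆ t) := by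
  have hunion := card_union_add_card_inter s t
  have hs' := card_le_card (inter_subset_left (s₁ := s) (s₂ := t))
  have ht' := card_le_card (inter_subset_right (s₁ := s) (s₂ := t))
  rw [symmDiff_eq_sup_sdiff_inf, sup_eq_union, inf_eq_inter,
    card_sdiff_of_subset inter_subset_union]
  obtain ⟨a, ha⟩ := hs
  obtain ⟨b, hb⟩ := ht
  exact ⟨a + b - #(s ∩ t), by omega⟩

inductive SymmDiffSpan (P : Finset α → Prop) : Finset α → Prop
  | empty : SymmDiffSpan P ∅
  | symmDiff {q s : Finset α} : P q → SymmDiffSpan P s → SymmDiffSpan P (q ∆ s)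

namespace SymmDiffSpan

variable {P : Finset α → Prop} {s : Finset α}

theorem exists_list_eq_foldr (h : SymmDiffSpan P s) :
    ∃ l : List (Finset α), (∀ q ∈ l, P q) ∧ s = l.foldr _root_.symmDiff ∅ := by
  induction h with
  | empty => exact ⟨[], by simp, rfl⟩
  | @symmDiff q s hq _ ih =>
    obtain ⟨l, hl, rfl⟩ := ih
    exact ⟨q :: l, by simpa [hq] using hl, rfl⟩

theorem image {β : Type*} [DecidableEq β] {P' : Finset β → Prop} {f : α → β}
    (hf : Function.Injective f) (hP : ∀ q, P q → P' (q.image f)) (h : SymmDiffSpan P s) :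
    SymmDiffSpan P' (s.image f) := by
  induction h with
  | empty => exact .empty
  | @symmDiff q s hq _ ih => simpa only [image_symmDiff _ _ hf] using ih.symmDiff (hP q hq)

theorem forall_mem {R : α → Prop} (hP : ∀ q, P q → ∀ x ∈ q, R x) (h : SymmDiffSpan P s) :
    ∀ x ∈ s, R x := by
  induction h with
  | empty => simp
  | @symmDiff q s hq _ ih =>
    intro x hx
    rcases mem_union.1 (symmDiff_subset_union hx) with hx | hx
    exacts [hP q hq x hx, ih x hx]

end SymmDiffSpan

theorem sum_pow_rank_symmDiff_lt {D q : Finset α} {p : α} {rank : α → ℕ} {k : ℕ}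
    (hpD : p ∈ D) (hpq : p ∈ q) (hqk : #q ≤ k) (hlt : ∀ x ∈ q, x ≠ p → rank x < rank p) :
    ∑ x ∈ D ∆ q, k ^ rank x < ∑ x ∈ D, k ^ rank x := by
  have hk : 0 < k := (card_pos.2 ⟨p, hpq⟩).trans_le hqk
  have hsub : D ∆ q ⊆ D.erase p ∪ q.erase p := by
    intro x hx
    rcases mem_symmDiff.1 hx with ⟨hxD, hxq⟩ | ⟨hxq, hxD⟩
    · exact mem_union_left _ (mem_erase.2 ⟨by rintro rfl; exact hxq hpq, hxD⟩)
    · exact mem_union_right _ (mem_erase.2 ⟨by rintro rfl; exact hxD hpD, hxq⟩)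
  have hq : (∑ x ∈ q.erase p, k ^ rank x) * k < k ^ rank p * k := by
    calc (∑ x ∈ q.erase p, k ^ rank x) * k
        = ∑ x ∈ q.erase p, k ^ (rank x + 1) := by simp only [sum_mul, pow_succ]
      _ ≤ #(q.erase p) • k ^ rank p := sum_le_card_nsmul _ _ _ fun x hx =>
          Nat.pow_le_pow_right hk (hlt x (mem_of_mem_erase hx) (ne_of_mem_erase hx))
      _ < k ^ rank p * k := by
          rw [smul_eq_mul, card_erase_of_mem hpq, mul_comm]
          exact Nat.mul_lt_mul_of_pos_left (by omega) (by positivity)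
  calc ∑ x ∈ D ∆ q, k ^ rank x
      ≤ ∑ x ∈ D.erase p ∪ q.erase p, k ^ rank x := sum_le_sum_of_subset hsub
    _ ≤ ∑ x ∈ D.erase p, k ^ rank x + ∑ x ∈ q.erase p, k ^ rank x := by
        rw [← sum_union_inter]; exact Nat.le_add_right _ _
    _ < ∑ x ∈ D.erase p, k ^ rank x + k ^ rank p := by
        gcongr; exact lt_of_mul_lt_mul_right hq k.zero_le
    _ = ∑ x ∈ D, k ^ rank x := sum_erase_add _ _ hpD

theorem exists_symmDiffSpan_forall_rank_eq_zero {P : Finset α → Prop} (rank : α → ℕ)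
    (k : ℕ) (hred : ∀ p, rank p ≠ 0 →
      ∃ q, P q ∧ p ∈ q ∧ #q ≤ k ∧ ∀ x ∈ q, x ≠ p → rank x < rank p)
    (D : Finset α) : ∃ E, SymmDiffSpan P E ∧ ∀ p ∈ D ∆ E, rank p = 0 := by
  induction hN : ∑ x ∈ D, k ^ rank x using Nat.strong_induction_on generalizing D with
  | _ N ih =>
  by_cases hD : ∀ p ∈ D, rank p = 0
  · exact ⟨∅, .empty, by rwa [← bot_eq_empty, symmDiff_bot]⟩
  push Not at hD
  obtain ⟨p, hpD, hp⟩ := hD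
  obtain ⟨q, hq, hpq, hqk, hlt⟩ := hred p hp
  obtain ⟨E, hE, hDE⟩ := ih _ (hN ▸ sum_pow_rank_symmDiff_lt hpD hpq hqk hlt) (D ∆ q) rfl
  exact ⟨q ∆ E, hE.symmDiff hq, by rwa [← symmDiff_assoc]⟩

end Span

section Balanced

variable {α β : Type*} [DecidableEq α] [DecidableEq β]

def IsBalanced (D : Finset (α × β)) : Prop :=
  (∀ a, Even #{p ∈ D | p.1 = a}) ∧ ∀ b, Even #{p ∈ D | p.2 = b}

theorem IsBalanced.symmDiff {D E : Finset (α × β)} (hD : IsBalanced D) (hE : IsBalanced E) :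
    IsBalanced (D ∆ E) :=
  ⟨fun a => by simpa only [filter_symmDiff] using even_card_symmDiff (hD.1 a) (hE.1 a),
   fun b => by simpa only [filter_symmDiff] using even_card_symmDiff (hD.2 b) (hE.2 b)⟩

theorem isBalanced_product {s : Finset α} {t : Finset β} (hs : Even #s) (ht : Even #t) :
    IsBalanced (s ×ˢ t) :=
  ⟨fun a => by rw [filter_product_left (· = a), card_product]; exact ht.mul_left _,
   fun b => by rw [filter_product_right (· = b), card_product]; exact hs.mul_right _⟩

theorem SymmDiffSpan.isBalanced {P : Finset (α × β) → Prop} {D : Finset (α × β)}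
    (hP : ∀ q, P q → IsBalanced q) (h : SymmDiffSpan P D) : IsBalanced D := by
  induction h with
  | empty => simp [IsBalanced]
  | symmDiff hq _ ih => exact (hP _ hq).symmDiff ih

theorem IsBalanced.notMem_of_forall_fst_eq {D : Finset (α × β)} (hD : IsBalanced D) {p : α × β}
    (h : ∀ x ∈ D, x.1 = p.1 → x.2 = p.2) : p ∉ D := by
  intro hp
  have : {x ∈ D | x.1 = p.1} = {p} :=
    eq_singleton_iff_unique_mem.2 ⟨mem_filter.2 ⟨hp, rfl⟩,
      fun x hx => Prod.ext (mem_filter.1 hx).2 (h x (mem_filter.1 hx).1 (mem_filter.1 hx).2)⟩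
  simpa [this] using hD.1 p.1

theorem IsBalanced.notMem_of_forall_snd_eq {D : Finset (α × β)} (hD : IsBalanced D) {p : α × β}
    (h : ∀ x ∈ D, x.2 = p.2 → x.1 = p.1) : p ∉ D := by
  intro hp
  have : {x ∈ D | x.2 = p.2} = {p} :=
    eq_singleton_iff_unique_mem.2 ⟨mem_filter.2 ⟨hp, rfl⟩,
      fun x hx => Prod.ext (h x (mem_filter.1 hx).1 (mem_filter.1 hx).2) (mem_filter.1 hx).2⟩
  simpa [this] using hD.2 p.2

end Balanced

section OffDiagRect

variable {α : Type*}

def IsOffDiagRect (q : Finset (α × α)) : Prop :=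
  ∃ s t : Finset α, #s = 2 ∧ #t = 2 ∧ Disjoint s t ∧ q = s ×ˢ t

theorem IsOffDiagRect.fst_ne_snd {q : Finset (α × α)} (hq : IsOffDiagRect q) :
    ∀ p ∈ q, p.1 ≠ p.2 := by
  obtain ⟨s, t, -, -, hst, rfl⟩ := hq
  intro p hp h
  obtain ⟨hs, ht⟩ := mem_product.1 hp
  exact disjoint_left.1 hst hs (h ▸ ht)

variable [DecidableEq α]

theorem IsOffDiagRect.isBalanced {q : Finset (α × α)} (hq : IsOffDiagRect q) : IsBalanced q := by
  obtain ⟨s, t, hs, ht, -, rfl⟩ := hq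
  exact isBalanced_product (hs ▸ even_two) (ht ▸ even_two)

theorem exists_isOffDiagRect_rank_lt {rank : α × α → ℕ} {a a' b b' : α} (ha : a ≠ a')
    (hb : b ≠ b') (hab : a ≠ b) (hab' : a ≠ b') (ha'b : a' ≠ b) (ha'b' : a' ≠ b')
    (h₁ : rank (a, b') < rank (a, b)) (h₂ : rank (a', b) < rank (a, b))
    (h₃ : rank (a', b') < rank (a, b)) :
    ∃ q, IsOffDiagRect q ∧ (a, b) ∈ q ∧ #q ≤ 4 ∧ ∀ x ∈ q, x ≠ (a, b) → rank x < rank (a, b) := by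
  refine ⟨{a, a'} ×ˢ {b, b'}, ⟨_, _, card_pair ha, card_pair hb, ?_, rfl⟩, by simp, ?_, ?_⟩
  · simp [hab.symm, hab'.symm, ha'b.symm, ha'b'.symm]
  · rw [card_product]; exact Nat.mul_le_mul card_le_two card_le_two
  · simp only [mem_product, mem_insert, mem_singleton]
    rintro ⟨x, y⟩ ⟨rfl | rfl, rfl | rfl⟩ hne
    exacts [absurd rfl hne, h₁, h₂, h₃]

end OffDiagRect

section TreeRank

def treeRank (i j : ℕ) : ℕ :=
  if i = j ∨ i = 0 ∨ j = 0 ∨ (i = 1 ∧ j = 2) then 0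
  else if i = 1 ∨ j = 2 then 1
  else if j = 1 then 3
  else 2

variable {n : ℕ}

theorem exists_isOffDiagRect_treeRank_lt (hn : 4 ≤ n) (p : Fin n × Fin n)
    (hp : treeRank p.1 p.2 ≠ 0) : ∃ q, IsOffDiagRect q ∧ p ∈ q ∧ #q ≤ 4 ∧
      ∀ x ∈ q, x ≠ p → treeRank x.1 x.2 < treeRank p.1 p.2 := by
  obtain ⟨i, j⟩ := p
  have key : ∀ i' j' : ℕ, (hi' : i' < n) → (hj' : j' < n) →
      (i.val ≠ i' ∧ j.val ≠ j' ∧ i.val ≠ j.val ∧ i.val ≠ j' ∧ i' ≠ j.val ∧ i' ≠ j') →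
      treeRank i j' < treeRank i j → treeRank i' j < treeRank i j →
      treeRank i' j' < treeRank i j → ∃ q, IsOffDiagRect q ∧ (i, j) ∈ q ∧ #q ≤ 4 ∧
        ∀ x ∈ q, x ≠ (i, j) → treeRank x.1 x.2 < treeRank i j :=
    fun i' j' hi' hj' hne h₁ h₂ h₃ =>
      exists_isOffDiagRect_rank_lt (rank := fun x : Fin n × Fin n => treeRank x.1 x.2)
        (a' := ⟨i', hi'⟩) (b' := ⟨j', hj'⟩) (Fin.ne_of_val_ne hne.1)
        (Fin.ne_of_val_ne hne.2.1) (Fin.ne_of_val_ne hne.2.2.1) (Fin.ne_of_val_ne hne.2.2.2.1)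
        (Fin.ne_of_val_ne hne.2.2.2.2.1) (Fin.ne_of_val_ne hne.2.2.2.2.2) h₁ h₂ h₃
  have hcases : (i.val = 1 ∧ 3 ≤ j.val) ∨ (j.val = 2 ∧ 3 ≤ i.val) ∨
      (2 ≤ i.val ∧ 3 ≤ j.val ∧ i.val ≠ j.val) ∨ (j.val = 1 ∧ i.val = 2) ∨
      (j.val = 1 ∧ 3 ≤ i.val) := by
    simp only [treeRank] at hp; split_ifs at hp <;> omega
  rcases hcases with h | h | h | h | h
  · refine key 0 2 (by omega) (by omega) (by omega) ?_ ?_ ?_ <;>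
      unfold treeRank <;> split_ifs <;> omega
  · refine key 1 0 (by omega) (by omega) (by omega) ?_ ?_ ?_ <;>
      unfold treeRank <;> split_ifs <;> omega
  · refine key 1 0 (by omega) (by omega) (by omega) ?_ ?_ ?_ <;>
      unfold treeRank <;> split_ifs <;> omega
  · refine key 0 3 (by omega) (by omega) (by omega) ?_ ?_ ?_ <;>
      unfold treeRank <;> split_ifs <;> omega
  · refine key 0 2 (by omega) (by omega) (by omega) ?_ ?_ ?_ <;>
      unfold treeRank <;> split_ifs <;> omega

theorem eq_empty_of_treeRank_eq_zero {F : Finset (Fin n × Fin n)} (hoff : ∀ p ∈ F, p.1 ≠ p.2)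
    (hF : IsBalanced F) (h0 : ∀ p ∈ F, treeRank p.1 p.2 = 0) : F = ∅ := by
  -- Peel off the leaves of the tree: rows `≥ 2`, then column `0`, then row `1`, then row `0`.
  have hT : ∀ p ∈ F, p.1.val ≠ p.2.val ∧
      (p.1.val = 0 ∨ p.2.val = 0 ∨ (p.1.val = 1 ∧ p.2.val = 2)) := by
    intro p hp
    have hne := Fin.val_ne_iff.2 (hoff p hp)
    have h := h0 p hp
    unfold treeRank at h
    split_ifs at h; omega
  have h₁ : ∀ p ∈ F, p.1.val ≤ 1 := by
    intro p hp
    by_contra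
    refine hF.notMem_of_forall_fst_eq (fun x hx hxp => Fin.ext ?_) hp
    have := hT x hx; have := hT p hp; have := congrArg Fin.val hxp; omega
  have h₂ : ∀ p ∈ F, p.2.val ≠ 0 := by
    intro p hp hp0
    refine hF.notMem_of_forall_snd_eq (fun x hx hxp => Fin.ext ?_) hp
    have := hT x hx; have := hT p hp; have := h₁ x hx; have := h₁ p hp
    have := congrArg Fin.val hxp; omega
  have h₃ : ∀ p ∈ F, p.1.val ≠ 1 := by
    intro p hp hp1
    refine hF.notMem_of_forall_fst_eq (fun x hx hxp => Fin.ext ?_) hp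
    have := hT x hx; have := hT p hp; have := h₂ x hx; have := h₂ p hp
    have := congrArg Fin.val hxp; omega
  refine eq_empty_of_forall_notMem fun p hp => ?_
  refine hF.notMem_of_forall_snd_eq (fun x hx _ => Fin.ext ?_) hp
  have := h₁ x hx; have := h₁ p hp; have := h₃ x hx; have := h₃ p hp; omega

theorem symmDiffSpan_isOffDiagRect (hn : 4 ≤ n) {D : Finset (Fin n × Fin n)}
    (hoff : ∀ p ∈ D, p.1 ≠ p.2) (hD : IsBalanced D) : SymmDiffSpan IsOffDiagRect D := by
  obtain ⟨E, hE, hDE⟩ := exists_symmDiffSpan_forall_rank_eq_zero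
    (fun p : Fin n × Fin n => treeRank p.1 p.2) 4
    (exists_isOffDiagRect_treeRank_lt hn) D
  have hEoff := hE.forall_mem fun q hq => hq.fst_ne_snd
  have hDE_off : ∀ p ∈ D ∆ E, p.1 ≠ p.2 := fun p hp =>
    (mem_union.1 (symmDiff_subset_union hp)).elim (hoff p) (hEoff p)
  have hDE_bal := hD.symmDiff (hE.isBalanced fun q hq => hq.isBalanced)
  rwa [symmDiff_eq_empty.1 (eq_empty_of_treeRank_eq_zero hDE_off hDE_bal hDE)]

end TreeRank

section CrossEdge

variable {α β : Type*}

def crossEdge (p : α × β) : Sym2 (α ⊕ β) := s(Sum.inl p.1, Sum.inr p.2)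

theorem crossEdge_injective : Function.Injective (crossEdge : α × β → Sym2 (α ⊕ β)) := by
  rintro ⟨a, b⟩ ⟨a', b'⟩ h
  simpa [crossEdge] using h

@[simp]
theorem inl_mem_crossEdge {a : α} {p : α × β} : Sum.inl a ∈ crossEdge p ↔ p.1 = a := by
  simp [crossEdge, eq_comm]

@[simp]
theorem inr_mem_crossEdge {b : β} {p : α × β} : Sum.inr b ∈ crossEdge p ↔ p.2 = b := by
  simp [crossEdge, eq_comm]

variable [DecidableEq α] [DecidableEq β]

theorem isBalanced_iff_even_card_incident {D : Finset (α × β)} :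
    IsBalanced D ↔ ∀ v, Even #{e ∈ D.image crossEdge | v ∈ e} := by
  simp only [filter_image, card_image_of_injective _ crossEdge_injective, Sum.forall,
    inl_mem_crossEdge, inr_mem_crossEdge, IsBalanced]

end CrossEdge

section TildeK

variable {n : ℕ}

@[simp]
theorem tildeK_adj_inl_inr {i j : Fin n} : (tildeK n).Adj (Sum.inl i) (Sum.inr j) ↔ i ≠ j := by
  simp [tildeK, SimpleGraph.fromRel_adj]

theorem exists_crossEdge_eq_of_mem_edgeSet {e : Sym2 (Fin n ⊕ Fin n)}
    (he : e ∈ (tildeK n).edgeSet) : ∃ p : Fin n × Fin n, crossEdge p = e := by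
  induction e using Sym2.ind with
  | _ u v =>
    obtain ⟨-, ⟨i, j, -, rfl, rfl⟩ | ⟨i, j, -, rfl, rfl⟩⟩ := he
    · exact ⟨(i, j), rfl⟩
    · exact ⟨(i, j), Sym2.eq_swap⟩

theorem IsOffDiagRect.isQuadCycle_image_crossEdge {q : Finset (Fin n × Fin n)}
    (hq : IsOffDiagRect q) : IsQuadCycle (tildeK n) (q.image crossEdge) := by
  obtain ⟨s, t, hs, ht, hst, rfl⟩ := hq
  obtain ⟨a, a', ha, rfl⟩ := card_eq_two.1 hs
  obtain ⟨b, b', hb, rfl⟩ := card_eq_two.1 ht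
  simp only [disjoint_insert_left, disjoint_insert_right, mem_insert, mem_singleton,
    disjoint_singleton, not_or] at hst
  obtain ⟨⟨hba, hba'⟩, hab', ha'b'⟩ := hst
  refine ⟨.inl a, .inr b, .inl a', .inr b', by simp, by simpa, by simp, by simp, by simpa, by simp,
    by simpa using Ne.symm hba, ?_, by simpa, ?_, ?_⟩
  · rw [SimpleGraph.adj_comm]; simpa using Ne.symm hba'
  · rw [SimpleGraph.adj_comm]; simpa
  · rw [Sym2.eq_swap (a := Sum.inr b), Sym2.eq_swap (a := Sum.inr b')]
    ext e
    simp only [mem_image, mem_product, mem_insert, mem_singleton, Prod.exists]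
    constructor
    · rintro ⟨x, y, ⟨rfl | rfl, rfl | rfl⟩, rfl⟩ <;> simp [crossEdge]
    · rintro (rfl | rfl | rfl | rfl) <;> exact ⟨_, _, by simp, rfl⟩

theorem IsOneCycle.exists_image_crossEdge_eq {C : Finset (Sym2 (Fin n ⊕ Fin n))}
    (hC : IsOneCycle (tildeK n) C) : ∃ D : Finset (Fin n × Fin n),
      (∀ p ∈ D, p.1 ≠ p.2) ∧ IsBalanced D ∧ D.image crossEdge = C := by
  obtain ⟨hCedge, hCeven⟩ := hC
  have hDC : ({p | crossEdge p ∈ C} : Finset (Fin n × Fin n)).image crossEdge = C := by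
    ext e
    refine ⟨fun he => ?_, fun he => ?_⟩
    · obtain ⟨p, hp, rfl⟩ := mem_image.1 he
      exact (mem_filter.1 hp).2
    · obtain ⟨p, rfl⟩ := exists_crossEdge_eq_of_mem_edgeSet (hCedge e he)
      exact mem_image_of_mem _ (mem_filter.2 ⟨mem_univ _, he⟩)
  refine ⟨_, fun p hp => ?_, isBalanced_iff_even_card_incident.2 (by rwa [hDC]), hDC⟩
  simpa [crossEdge] using hCedge _ (mem_filter.1 hp).2

end TildeK

/-- For `n ≥ 4`, every 1-cycle in `K̃_n` is a symmetric-difference sum of finitely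
many edge sets of simple cycles of length 4. -/
theorem isOneCycle_tildeK_eq_sum_of_quads (n : ℕ) (hn : 4 ≤ n)
    (C : Finset (Sym2 (Fin n ⊕ Fin n))) (hC : IsOneCycle (tildeK n) C) :
    ∃ l : List (Finset (Sym2 (Fin n ⊕ Fin n))),
      (∀ s ∈ l, IsQuadCycle (tildeK n) s) ∧
      C = l.foldr symmDiff ∅ := by
  obtain ⟨D, hoff, hD, rfl⟩ := hC.exists_image_crossEdge_eq
  exact ((symmDiffSpan_isOffDiagRect hn hoff hD).image crossEdge_injective
    fun q hq => hq.isQuadCycle_image_crossEdge).exists_list_eq_foldr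
end

section
/- Let K be a finite connected simple graph with V vertices and E edges, and let t be an automorphism of K with t∘t = id and with no fixed vertices (tv ≠ v for every vertex v). Let I be the number of edges e of K with t(e) = e (where t acts on edges via its action on vertices). Then the number of t-symmetric 1-cycles of K equals 2^{(E-V+2)/2} if I = 0, and equals 2^{(E-V+I)/2} if I > 0. -/
/-!
The symmetric edge sets form an `𝔽₂`-space `Ω` under symmetric difference, of dimension
`(E + I) / 2`, the number of edge orbits of `t`. The symmetric 1-cycles are the kernel of the mod-2
boundary map `∂` on `Ω`, so there are `|Ω| / |∂Ω|` of them. A boundary of a symmetric edge set is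
a `t`-invariant function on the vertices, hence determined by its values on a set `T` of orbit
representatives, `|T| = V / 2`. Along a path `∂Ω` contains the sum of the indicators of any two
vertex orbits, and a fixed edge `{a, t a}` is itself the indicator of an orbit; so for `I > 0`,
`∂Ω` consists of all invariant functions. For `I = 0` every symmetric edge set `C` has even size,
and `∑_{v ∈ T} deg_C v = |C|` by the handshake lemma and invariance of the degrees; so `∂Ω` is the
index-two subspace of invariant functions with even sum over `T`.
-/

open Finset Function
open scoped symmDiff

section OrbitTransversal

variable {α : Type*} {g : α → α} {s T : Finset α}

structure IsOrbitTransversal (g : α → α) (s T : Finset α) : Prop where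
  subset : T ⊆ s
  mem_or_apply_mem : ∀ x ∈ s, x ∈ T ∨ g x ∈ T
  apply_eq_of_mem : ∀ x ∈ T, g x ∈ T → g x = x

lemma Function.Involutive.exists_isOrbitTransversal (hg : Involutive g) (s : Finset α)
    (hs : ∀ x ∈ s, g x ∈ s) : ∃ T, IsOrbitTransversal g s T := by
  classical
  let : LinearOrder α := IsWellOrder.linearOrder WellOrderingRel
  refine ⟨{x ∈ s | x ≤ g x}, filter_subset _ _, fun x hx => ?_, fun x hx hgx => ?_⟩
  · rcases le_total x (g x) with h | h
    · exact .inl (mem_filter.2 ⟨hx, h⟩)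
    · exact .inr (mem_filter.2 ⟨hs x hx, by rwa [hg x]⟩)
  · have h₁ := (mem_filter.1 hx).2
    have h₂ := (mem_filter.1 hgx).2
    rw [hg x] at h₂
    exact le_antisymm h₂ h₁

namespace IsOrbitTransversal

lemma mem_iff_apply_notMem [Fintype α] (hT : IsOrbitTransversal g univ T)
    (hfree : ∀ x, g x ≠ x) (x : α) : x ∈ T ↔ g x ∉ T :=
  ⟨fun hx hgx => hfree x (hT.apply_eq_of_mem x hx hgx),
    fun hgx => (hT.mem_or_apply_mem x (mem_univ x)).resolve_right hgx⟩

variable [DecidableEq α]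

lemma two_mul_card (hg : Involutive g) (hs : ∀ x ∈ s, g x ∈ s) (hT : IsOrbitTransversal g s T) :
    2 * #T = #s + #{x ∈ s | g x = x} := by
  have h_union : T ∪ T.image g = s := by
    refine Subset.antisymm (union_subset hT.subset fun y hy => ?_) fun x hx => ?_
    · obtain ⟨x, hx, rfl⟩ := mem_image.1 hy
      exact hs x (hT.subset hx)
    · rcases hT.mem_or_apply_mem x hx with h | h
      · exact mem_union_left _ h
      · exact mem_union_right _ (mem_image.2 ⟨g x, h, hg x⟩)
  have h_inter : T ∩ T.image g = {x ∈ s | g x = x} := by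
    ext x
    simp only [mem_inter, mem_image, mem_filter]
    constructor
    · rintro ⟨hx, y, hy, rfl⟩
      exact ⟨hT.subset hx, by rw [hg y, hT.apply_eq_of_mem y hy hx]⟩
    · rintro ⟨hx, hfix⟩
      have hxT : x ∈ T := by simpa [hfix] using hT.mem_or_apply_mem x hx
      exact ⟨hxT, x, hxT, hfix⟩
  rw [two_mul, ← h_inter, ← h_union, card_union_add_card_inter,
    card_image_of_injective _ hg.injective]

lemma card_filter_image_eq_self (hg : Involutive g) (hs : ∀ x ∈ s, g x ∈ s)
    (hT : IsOrbitTransversal g s T) : #{C ∈ s.powerset | C.image g = C} = 2 ^ #T := by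
  rw [← card_powerset]
  refine card_bij' (fun C _ => C ∩ T) (fun S _ => S ∪ S.image g) (fun C _ => ?_) (fun S hS => ?_)
    (fun C hC => ?_) (fun S hS => ?_)
  · exact mem_powerset.2 inter_subset_right
  · rw [mem_powerset] at hS
    refine mem_filter.2 ⟨mem_powerset.2 (union_subset (hS.trans hT.subset) fun y hy => ?_), ?_⟩
    · obtain ⟨x, hx, rfl⟩ := mem_image.1 hy
      exact hs x (hT.subset (hS hx))
    · rw [image_union, image_image, hg.comp_self, image_id, union_comm]
  · obtain ⟨hCs, hCg⟩ := mem_filter.1 hC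
    rw [mem_powerset] at hCs
    ext x
    simp only [mem_union, mem_inter, mem_image]
    constructor
    · rintro (⟨hx, -⟩ | ⟨y, ⟨hy, -⟩, rfl⟩)
      · exact hx
      · rw [← hCg]; exact mem_image_of_mem g hy
    · intro hx
      rcases hT.mem_or_apply_mem x (hCs hx) with h | h
      · exact .inl ⟨hx, h⟩
      · exact .inr ⟨g x, ⟨by rw [← hCg]; exact mem_image_of_mem g hx, h⟩, hg x⟩
  · rw [mem_powerset] at hS
    ext x
    simp only [mem_inter, mem_union, mem_image]
    constructor
    · rintro ⟨hx | ⟨y, hy, rfl⟩, hgy⟩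
      · exact hx
      · rwa [hT.apply_eq_of_mem y (hS hy) hgy]
    · exact fun hx => ⟨.inl hx, hS hx⟩

end IsOrbitTransversal

end OrbitTransversal

section FreeInvolution

variable {α : Type*} {g : α → α} {T : Finset α}

lemma sum_univ_eq_sum_add_apply [Fintype α] [DecidableEq α] {M : Type*} [AddCommMonoid M]
    (hg : Involutive g) (hT : ∀ x, x ∈ T ↔ g x ∉ T) (f : α → M) :
    ∑ x, f x = ∑ x ∈ T, (f x + f (g x)) := by
  rw [← sum_add_sum_compl T f, sum_add_distrib]
  congr 1
  refine sum_bij' (fun x _ => g x) (fun x _ => g x) (fun x hx => ?_) (fun x hx => ?_)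
    (fun x _ => hg x) (fun x _ => hg x) (fun x _ => by rw [hg x])
  · by_contra h
    exact mem_compl.1 hx ((hT x).2 h)
  · exact mem_compl.2 ((hT x).1 hx)

lemma eq_of_invariant_of_forall_mem_eq {M : Type*} (hT : ∀ x, x ∈ T ↔ g x ∉ T) {F F' : α → M}
    (hF : ∀ x, F (g x) = F x) (hF' : ∀ x, F' (g x) = F' x) (h : ∀ x ∈ T, F x = F' x) :
    F = F' := by
  funext x
  by_cases hx : x ∈ T
  · exact h x hx
  · rw [← hF, ← hF', h (g x) (not_not.1 (mt (hT x).2 hx))]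

end FreeInvolution

lemma card_filter_sum_eq_zero_mul_two (ι : Type*) [Fintype ι] [DecidableEq ι] [Nonempty ι] :
    #{c : ι → ZMod 2 | ∑ i, c i = 0} * 2 = 2 ^ Fintype.card ι := by
  obtain ⟨i₀⟩ := ‹Nonempty ι›
  have h_sum (c : ι → ZMod 2) : ∑ i, (c + Pi.single i₀ 1 : ι → ZMod 2) i = ∑ i, c i + 1 := by
    simp [sum_add_distrib]
  have h_swap : #{c : ι → ZMod 2 | ∑ i, c i = 0} = #{c : ι → ZMod 2 | ¬∑ i, c i = 0} := by
    refine card_bij' (fun c _ => c + Pi.single i₀ 1) (fun c _ => c + Pi.single i₀ 1)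
      (fun c hc => ?_) (fun c hc => ?_) (fun c _ => ?_) (fun c _ => ?_)
    · simp only [mem_filter, mem_univ, true_and] at hc ⊢
      rw [h_sum, hc]
      decide
    · simp only [mem_filter, mem_univ, true_and] at hc ⊢
      rw [h_sum]
      exact (by decide : ∀ a : ZMod 2, a ≠ 0 → a + 1 = 0) _ hc
    all_goals rw [add_assoc, ZModModule.add_self, add_zero]
  rw [mul_two]
  nth_rewrite 2 [h_swap]
  rw [card_filter_add_card_filter_not, card_univ, Fintype.card_fun, ZMod.card]

lemma card_filter_eq_zero_mul_card_image {α M : Type*} [DecidableEq α] [AddGroup M]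
    [DecidableEq M] {Ω : Finset (Finset α)} (hΩ : ∀ A ∈ Ω, ∀ B ∈ Ω, A ∆ B ∈ Ω)
    {φ : Finset α → M} (hφ : ∀ A B, φ (A ∆ B) = φ A + φ B) :
    #{C ∈ Ω | φ C = 0} * #(Ω.image φ) = #Ω := by
  have h_empty : φ ∅ = 0 := by simpa using hφ ∅ ∅
  have h_fiber : ∀ m ∈ Ω.image φ, #{C ∈ Ω | φ C = m} = #{C ∈ Ω | φ C = 0} := by
    intro m hm
    obtain ⟨D, hD, rfl⟩ := mem_image.1 hm
    refine card_bij' (fun C _ => C ∆ D) (fun C _ => C ∆ D) (fun C hC => ?_) (fun C hC => ?_)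
      (fun C _ => symmDiff_symmDiff_cancel_right D C)
      (fun C _ => symmDiff_symmDiff_cancel_right D C)
    · obtain ⟨hC, hCD⟩ := mem_filter.1 hC
      refine mem_filter.2 ⟨hΩ C hC D hD, ?_⟩
      rw [hφ, hCD, ← hφ, symmDiff_self, bot_eq_empty, h_empty]
    · obtain ⟨hC, hC0⟩ := mem_filter.1 hC
      exact mem_filter.2 ⟨hΩ C hC D hD, by rw [hφ, hC0, zero_add]⟩
  rw [card_eq_sum_card_image φ Ω, sum_congr rfl h_fiber, sum_const, smul_eq_mul, mul_comm]

lemma natCast_card_symmDiff {α : Type*} [DecidableEq α] (X Y : Finset α) :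
    ((#(X ∆ Y) : ℕ) : ZMod 2) = #X + #Y := by
  have h₁ := card_union_add_card_inter X Y
  have h₂ := card_sdiff_add_card_inter (X ∪ Y) (X ∩ Y)
  have h₃ : (X ∪ Y) \ (X ∩ Y) = X ∆ Y := (symmDiff_eq_sup_sdiff_inf X Y).symm
  rw [h₃, inter_eq_right.2 inter_subset_union] at h₂
  have h : #(X ∆ Y) + 2 * #(X ∩ Y) = #X + #Y := by omega
  have h' := congrArg (Nat.cast : ℕ → ZMod 2) h
  push_cast at h'
  rwa [show (2 : ZMod 2) = 0 from rfl, zero_mul, add_zero] at h'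

lemma eq_two_pow_sub_of_mul_two_pow_eq {k a b : ℕ} (h : k * 2 ^ a = 2 ^ b) :
    k = 2 ^ (b - a) ∧ a ≤ b := by
  have hab : a ≤ b := (Nat.pow_dvd_pow_iff_le_right one_lt_two).1 (Dvd.intro_left k h)
  refine ⟨Nat.eq_of_mul_eq_mul_right (Nat.two_pow_pos a) ?_, hab⟩
  rw [h, ← pow_add, Nat.sub_add_cancel hab]

section IncidenceParity

variable {V : Type*} [DecidableEq V]

def incidenceParity (C : Finset (Sym2 V)) (v : V) : ZMod 2 := #{e ∈ C | v ∈ e}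

def pairIndicator (a b : V) : V → ZMod 2 := Pi.single a 1 + Pi.single b 1

lemma incidenceParity_symmDiff (A B : Finset (Sym2 V)) :
    incidenceParity (A ∆ B) = incidenceParity A + incidenceParity B := by
  funext v
  have h : {e ∈ A ∆ B | v ∈ e} = {e ∈ A | v ∈ e} ∆ {e ∈ B | v ∈ e} := by
    ext e; simp only [mem_filter, mem_symmDiff]; tauto
  rw [Pi.add_apply, incidenceParity, h, natCast_card_symmDiff]
  rfl

lemma incidenceParity_empty : incidenceParity (∅ : Finset (Sym2 V)) = 0 := by
  funext v
  simp [incidenceParity]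

lemma incidenceParity_eq_zero_iff {C : Finset (Sym2 V)} :
    incidenceParity C = 0 ↔ ∀ v, Even #{e ∈ C | v ∈ e} := by
  simp only [funext_iff, incidenceParity, Pi.zero_apply, ZMod.natCast_eq_zero_iff_even]

lemma incidenceParity_singleton {a b : V} (hab : a ≠ b) :
    incidenceParity {s(a, b)} = pairIndicator a b := by
  funext v
  by_cases hva : v = a <;> by_cases hvb : v = b <;>
    simp_all [incidenceParity, pairIndicator, filter_singleton]

lemma incidenceParity_pair {a b c d : V} (hab : a ≠ b) (hcd : c ≠ d) (h : s(a, b) ≠ s(c, d)) :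
    incidenceParity {s(a, b), s(c, d)} = pairIndicator a b + pairIndicator c d := by
  rw [insert_eq, ← symmDiff_eq_union (disjoint_singleton.2 h), incidenceParity_symmDiff,
    incidenceParity_singleton hab, incidenceParity_singleton hcd]

lemma card_filter_apply_mem_eq {g : V → V} (hg : Injective g) {C : Finset (Sym2 V)}
    (hC : C.image (Sym2.map g) = C) (v : V) :
    #{e ∈ C | g v ∈ e} = #{e ∈ C | v ∈ e} := by
  have h_mem : ∀ e : Sym2 V, g v ∈ Sym2.map g e ↔ v ∈ e := fun e => by
    induction e with | _ a b => simp [hg.eq_iff]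
  conv_lhs => rw [← hC]
  rw [filter_image, card_image_of_injective _ (Sym2.map.injective hg)]
  simp only [h_mem]

lemma sum_card_filter_mem_eq_two_mul_card [Fintype V] {C : Finset (Sym2 V)}
    (hC : ∀ e ∈ C, ¬e.IsDiag) : ∑ v, #{e ∈ C | v ∈ e} = 2 * #C := by
  have h := sum_card_bipartiteAbove_eq_sum_card_bipartiteBelow (fun (v : V) e => v ∈ e)
    (s := univ) (t := C)
  simp only [bipartiteAbove, bipartiteBelow] at h
  rw [h, mul_comm, ← smul_eq_mul, ← sum_const]
  refine sum_congr rfl fun e he => ?_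
  rw [← Sym2.card_toFinset_of_not_isDiag e (hC e he)]
  congr 1
  ext v
  simp

lemma sum_smul_pairIndicator_apply {g : V → V} {T : Finset V} (hT : ∀ x, x ∈ T ↔ g x ∉ T)
    (c : T → ZMod 2) (y : T) : (∑ x : T, c x • pairIndicator (x : V) (g x)) y = c y := by
  have h_ne : ∀ x : T, (y : V) ≠ g x := fun x h => (hT x).1 x.2 (h ▸ y.2)
  simp only [pairIndicator, Finset.sum_apply, Pi.smul_apply, Pi.add_apply, Pi.single_apply,
    if_neg (h_ne _), add_zero, smul_eq_mul, mul_ite, mul_one, mul_zero]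
  simp

end IncidenceParity

lemma Function.Involutive.sym2_map {α : Type*} {f : α → α} (hf : Involutive f) :
    Involutive (Sym2.map f) := fun e => by
  rw [Sym2.map_map, hf.comp_self, Sym2.map_id, id]

section SymmetricEdgeSets

variable {V : Type*} [Fintype V] [DecidableEq V] {G : SimpleGraph V} [DecidableRel G.Adj]
  {t : G ≃g G}

variable (G t) in
def symmetricEdgeSets : Finset (Finset (Sym2 V)) :=
  {C ∈ G.edgeFinset.powerset | C.image (Sym2.map t) = C}

lemma mem_symmetricEdgeSets {C : Finset (Sym2 V)} :
    C ∈ symmetricEdgeSets G t ↔ C ⊆ G.edgeFinset ∧ C.image (Sym2.map t) = C := by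
  rw [symmetricEdgeSets, mem_filter, mem_powerset]

omit [DecidableEq V] in
lemma map_mem_edgeFinset {e : Sym2 V} (he : e ∈ G.edgeFinset) : Sym2.map t e ∈ G.edgeFinset :=
  SimpleGraph.mem_edgeFinset.2 ((SimpleGraph.Iso.map_mem_edgeSet_iff t).2
    (SimpleGraph.mem_edgeFinset.1 he))

lemma symmDiff_mem_symmetricEdgeSets {A B : Finset (Sym2 V)} (hA : A ∈ symmetricEdgeSets G t)
    (hB : B ∈ symmetricEdgeSets G t) : A ∆ B ∈ symmetricEdgeSets G t := by
  rw [mem_symmetricEdgeSets] at *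
  exact ⟨symmDiff_subset_union.trans (union_subset hA.1 hB.1),
    by rw [image_symmDiff _ _ (Sym2.map.injective t.injective), hA.2, hB.2]⟩

lemma exists_two_mul_eq_and_card_symmetricEdgeSets (hinv : Involutive t) :
    ∃ n, 2 * n = #G.edgeFinset + #{e ∈ G.edgeFinset | Sym2.map t e = e} ∧
      #(symmetricEdgeSets G t) = 2 ^ n := by
  have hmap := hinv.sym2_map
  obtain ⟨T, hT⟩ := hmap.exists_isOrbitTransversal G.edgeFinset fun e => map_mem_edgeFinset
  exact ⟨#T, hT.two_mul_card hmap (fun e => map_mem_edgeFinset),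
    hT.card_filter_image_eq_self hmap (fun e => map_mem_edgeFinset)⟩

lemma natCard_oneCycles_eq :
    Nat.card {C : Finset (Sym2 V) // IsOneCycle G C ∧ C.image (Sym2.map t) = C} =
      #{C ∈ symmetricEdgeSets G t | incidenceParity C = 0} := by
  rw [← Fintype.card_coe, ← Nat.card_eq_fintype_card]
  refine Nat.card_congr (Equiv.subtypeEquivRight fun C => ?_)
  rw [mem_filter, mem_symmetricEdgeSets, incidenceParity_eq_zero_iff, IsOneCycle]
  simp only [subset_iff, SimpleGraph.mem_edgeFinset]
  tauto

lemma sum_card_filter_mem_eq_card (hinv : Involutive t) {T : Finset V}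
    (hT : ∀ v, v ∈ T ↔ t v ∉ T) {C : Finset (Sym2 V)} (hC : C ∈ symmetricEdgeSets G t) :
    ∑ v ∈ T, #{e ∈ C | v ∈ e} = #C := by
  rw [mem_symmetricEdgeSets] at hC
  have h_diag : ∀ e ∈ C, ¬e.IsDiag := fun e he => G.not_isDiag_of_mem_edgeFinset (hC.1 he)
  have h := sum_card_filter_mem_eq_two_mul_card h_diag
  rw [sum_univ_eq_sum_add_apply hinv hT] at h
  simp only [card_filter_apply_mem_eq t.injective hC.2, ← two_mul, ← mul_sum] at h
  omega

lemma sum_incidenceParity_eq_zero (hinv : Involutive t) {T : Finset V}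
    (hT : ∀ v, v ∈ T ↔ t v ∉ T) (hfix : ∀ e ∈ G.edgeFinset, Sym2.map t e ≠ e)
    {C : Finset (Sym2 V)} (hC : C ∈ symmetricEdgeSets G t) :
    ∑ v ∈ T, incidenceParity C v = 0 := by
  have hmap := hinv.sym2_map
  obtain ⟨hCE, hCt⟩ := mem_symmetricEdgeSets.1 hC
  have hCmap : ∀ e ∈ C, Sym2.map t e ∈ C := fun e he => hCt ▸ mem_image_of_mem _ he
  obtain ⟨S, hS⟩ := hmap.exists_isOrbitTransversal C hCmap
  have h_even : 2 * #S = #C := by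
    rw [hS.two_mul_card hmap hCmap, filter_false_of_mem fun e he => hfix e (hCE he), card_empty,
      add_zero]
  simp only [incidenceParity]
  rw [← Nat.cast_sum, sum_card_filter_mem_eq_card hinv hT hC, ← h_even, Nat.cast_mul]
  exact zero_mul _

lemma empty_mem_symmetricEdgeSets : ∅ ∈ symmetricEdgeSets G t :=
  mem_symmetricEdgeSets.2 ⟨empty_subset _, image_empty _⟩

variable (G t) in
def symmetricBoundaries : Submodule (ZMod 2) (V → ZMod 2) where
  carrier := incidenceParity '' (symmetricEdgeSets G t : Set (Finset (Sym2 V)))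
  add_mem' := by
    rintro _ _ ⟨A, hA, rfl⟩ ⟨B, hB, rfl⟩
    exact ⟨A ∆ B, symmDiff_mem_symmetricEdgeSets hA hB, incidenceParity_symmDiff A B⟩
  zero_mem' := ⟨∅, empty_mem_symmetricEdgeSets, incidenceParity_empty⟩
  smul_mem' c F hF := by
    rcases (by decide : ∀ c : ZMod 2, c = 0 ∨ c = 1) c with rfl | rfl
    · rw [zero_smul]
      exact ⟨∅, empty_mem_symmetricEdgeSets, incidenceParity_empty⟩
    · rwa [one_smul]

lemma mem_symmetricBoundaries {F : V → ZMod 2} :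
    F ∈ symmetricBoundaries G t ↔ F ∈ (symmetricEdgeSets G t).image incidenceParity := by
  rw [← mem_coe, coe_image]
  rfl

lemma incidenceParity_apply_map {C : Finset (Sym2 V)} (hC : C ∈ symmetricEdgeSets G t) (v : V) :
    incidenceParity C (t v) = incidenceParity C v :=
  congrArg Nat.cast (card_filter_apply_mem_eq t.injective (mem_symmetricEdgeSets.1 hC).2 v)

lemma pairIndicator_add_mem_symmetricBoundaries_of_adj (hinv : Involutive t)
    (hfree : ∀ v, t v ≠ v) {a b : V} (hab : G.Adj a b) :
    pairIndicator a (t a) + pairIndicator b (t b) ∈ symmetricBoundaries G t := by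
  by_cases hba : b = t a
  · rw [hba, hinv a, pairIndicator, pairIndicator, add_comm (Pi.single (t a) 1),
      ZModModule.add_self]
    exact zero_mem _
  have hne : s(a, b) ≠ s(t a, t b) := by
    rw [Ne, Sym2.eq_iff]
    rintro (⟨h, -⟩ | ⟨-, h⟩)
    · exact hfree a h.symm
    · exact hba h
  have he : s(a, b) ∈ G.edgeFinset := by simpa using hab
  have hC : {s(a, b), s(t a, t b)} ∈ symmetricEdgeSets G t := by
    refine mem_symmetricEdgeSets.2 ⟨insert_subset he (singleton_subset_iff.2 ?_), ?_⟩
    · simpa using map_mem_edgeFinset (t := t) he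
    · rw [image_insert, image_singleton, Sym2.map_mk, Sym2.map_mk, hinv a, hinv b,
        pair_comm]
  refine ⟨_, hC, ?_⟩
  rw [incidenceParity_pair hab.ne (t.injective.ne hab.ne) hne]
  simp only [pairIndicator]
  abel

lemma pairIndicator_add_mem_symmetricBoundaries (hconn : G.Connected) (hinv : Involutive t)
    (hfree : ∀ v, t v ≠ v) (a b : V) :
    pairIndicator a (t a) + pairIndicator b (t b) ∈ symmetricBoundaries G t := by
  obtain ⟨w⟩ := hconn.preconnected a b
  induction w with
  | nil =>
    rw [ZModModule.add_self]
    exact zero_mem _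
  | cons h _ ih =>
    rw [← ZModModule.add_add_add_cancel _ (pairIndicator _ (t _))]
    exact add_mem (pairIndicator_add_mem_symmetricBoundaries_of_adj hinv hfree h) ih

lemma pairIndicator_mem_symmetricBoundaries (hconn : G.Connected) (hinv : Involutive t)
    (hfree : ∀ v, t v ≠ v) (hfix : ∃ e ∈ G.edgeFinset, Sym2.map t e = e) (a : V) :
    pairIndicator a (t a) ∈ symmetricBoundaries G t := by
  obtain ⟨e, he, he_fix⟩ := hfix
  induction e using Sym2.inductionOn with
  | hf b c =>
    have hc : c = t b := by
      rw [Sym2.map_mk, Sym2.eq_iff] at he_fix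
      rcases he_fix with ⟨h, -⟩ | ⟨h, -⟩
      · exact absurd h (hfree b)
      · exact h.symm
    subst hc
    have hb : pairIndicator b (t b) ∈ symmetricBoundaries G t :=
      ⟨{s(b, t b)}, mem_symmetricEdgeSets.2 ⟨singleton_subset_iff.2 he, by
        rw [image_singleton, he_fix]⟩, incidenceParity_singleton (hfree b).symm⟩
    simpa [add_assoc, ZModModule.add_self] using
      add_mem (pairIndicator_add_mem_symmetricBoundaries hconn hinv hfree a b) hb

lemma card_image_incidenceParity_eq_card_image_restrict {T : Finset V}
    (hT : ∀ v, v ∈ T ↔ t v ∉ T) :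
    #((symmetricEdgeSets G t).image incidenceParity) =
      #(((symmetricEdgeSets G t).image incidenceParity).image fun F (x : T) => F x) := by
  refine (card_image_of_injOn fun F hF F' hF' h => ?_).symm
  obtain ⟨C, hC, rfl⟩ := mem_image.1 hF
  obtain ⟨C', hC', rfl⟩ := mem_image.1 hF'
  exact eq_of_invariant_of_forall_mem_eq hT (incidenceParity_apply_map hC)
    (incidenceParity_apply_map hC') fun x hx => congrFun h ⟨x, hx⟩

lemma card_image_incidenceParity_of_exists_fixed (hconn : G.Connected) (hinv : Involutive t)
    (hfree : ∀ v, t v ≠ v) (hfix : ∃ e ∈ G.edgeFinset, Sym2.map t e = e) {T : Finset V}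
    (hT : ∀ v, v ∈ T ↔ t v ∉ T) :
    #((symmetricEdgeSets G t).image incidenceParity) = 2 ^ #T := by
  have h_univ : ((symmetricEdgeSets G t).image incidenceParity).image (fun F (x : T) => F x) =
      univ := eq_univ_of_forall fun c => mem_image.2
    ⟨∑ x : T, c x • pairIndicator (x : V) (t x), mem_symmetricBoundaries.1 (sum_mem fun x _ =>
      Submodule.smul_mem _ _ (pairIndicator_mem_symmetricBoundaries hconn hinv hfree hfix x)),
      funext (sum_smul_pairIndicator_apply hT c)⟩
  rw [card_image_incidenceParity_eq_card_image_restrict hT, h_univ, card_univ, Fintype.card_fun,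
    ZMod.card, Fintype.card_coe]

lemma card_image_incidenceParity_mul_two_of_forall_not_fixed (hconn : G.Connected)
    (hinv : Involutive t) (hfree : ∀ v, t v ≠ v) (hfix : ∀ e ∈ G.edgeFinset, Sym2.map t e ≠ e)
    {T : Finset V} (hT : ∀ v, v ∈ T ↔ t v ∉ T) :
    #((symmetricEdgeSets G t).image incidenceParity) * 2 = 2 ^ #T := by
  obtain ⟨x₀⟩ : Nonempty T := by
    obtain ⟨v⟩ := hconn.nonempty
    by_cases hv : v ∈ T
    · exact ⟨v, hv⟩
    · exact ⟨t v, not_not.1 (mt (hT v).2 hv)⟩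
  have h_image : ((symmetricEdgeSets G t).image incidenceParity).image (fun F (x : T) => F x) =
      ({c | ∑ x, c x = 0} : Finset (T → ZMod 2)) := by
    ext c
    rw [mem_filter, and_iff_right (mem_univ c), mem_image]
    constructor
    · rintro ⟨F, hF, rfl⟩
      obtain ⟨C, hC, rfl⟩ := mem_image.1 hF
      rw [sum_coe_sort T (incidenceParity C)]
      exact sum_incidenceParity_eq_zero hinv hT hfix hC
    · intro hc
      -- each term is a sum of two orbit indicators, hence a boundary; the `x₀` parts cancel
      refine ⟨∑ x : T, c x • (pairIndicator (x : V) (t x) + pairIndicator (x₀ : V) (t x₀)),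
        mem_symmetricBoundaries.1 (sum_mem fun x _ => Submodule.smul_mem _ _
          (pairIndicator_add_mem_symmetricBoundaries hconn hinv hfree x x₀)), ?_⟩
      funext y
      simp only [smul_add, sum_add_distrib, ← sum_smul, hc, zero_smul, add_zero]
      exact sum_smul_pairIndicator_apply hT c y
  have : Nonempty T := ⟨x₀⟩
  rw [card_image_incidenceParity_eq_card_image_restrict hT, h_image,
    card_filter_sum_eq_zero_mul_two, Fintype.card_coe]

end SymmetricEdgeSets

/-- Let `K` be a finite connected simple graph with `V` vertices and `E` edges, and
`t` a fixed-point-free involutive automorphism of `K`. If `I` is the number of edges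
fixed by `t`, then the number of `t`-symmetric 1-cycles of `K` equals
`2 ^ ((E - V + 2)/2)` if `I = 0` and `2 ^ ((E - V + I)/2)` if `I > 0`. -/
theorem card_symmetric_oneCycles {V : Type*} [Fintype V] [DecidableEq V]
    (G : SimpleGraph V) [DecidableRel G.Adj] (hconn : G.Connected)
    (t : G ≃g G) (hinv : ∀ v : V, t (t v) = v) (hfree : ∀ v : V, t v ≠ v)
    (I : ℕ) (hI : I = (G.edgeFinset.filter (fun e => Sym2.map ⇑t e = e)).card) :
    (I = 0 →
      Nat.card {C : Finset (Sym2 V) // IsOneCycle G C ∧ C.image (Sym2.map ⇑t) = C}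
        = 2 ^ ((G.edgeFinset.card + 2 - Fintype.card V) / 2)) ∧
    (0 < I →
      Nat.card {C : Finset (Sym2 V) // IsOneCycle G C ∧ C.image (Sym2.map ⇑t) = C}
        = 2 ^ ((G.edgeFinset.card + I - Fintype.card V) / 2)) := by
  obtain ⟨n, hn, h_edges⟩ := exists_two_mul_eq_and_card_symmetricEdgeSets (t := t) hinv
  obtain ⟨T, hT⟩ := Involutive.exists_isOrbitTransversal hinv univ fun v _ => mem_univ (t v)
  have h_vertices : 2 * #T = Fintype.card V := by
    simpa [hfree] using hT.two_mul_card hinv fun v _ => mem_univ (t v)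
  replace hT := hT.mem_iff_apply_notMem hfree
  have h_count := card_filter_eq_zero_mul_card_image (fun A hA B hB =>
    symmDiff_mem_symmetricEdgeSets hA hB) incidenceParity_symmDiff (Ω := symmetricEdgeSets G t)
  rw [← natCard_oneCycles_eq, h_edges] at h_count
  rw [← hI] at hn
  refine ⟨fun hI0 => ?_, fun hIpos => ?_⟩
  · have hfix : ∀ e ∈ G.edgeFinset, Sym2.map t e ≠ e := fun e he h_fix =>
      notMem_empty e (card_eq_zero.1 (hI ▸ hI0) ▸ mem_filter.2 ⟨he, h_fix⟩)
    obtain ⟨h_eq, h_le⟩ := eq_two_pow_sub_of_mul_two_pow_eq (a := #T) (b := n + 1) (by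
      rw [← card_image_incidenceParity_mul_two_of_forall_not_fixed hconn hinv hfree hfix hT,
        ← mul_assoc, h_count, pow_succ])
    rw [h_eq]
    congr 1
    omega
  · have hfix : ∃ e ∈ G.edgeFinset, Sym2.map t e = e := by
      obtain ⟨e, he⟩ := card_pos.1 (hI ▸ hIpos)
      exact ⟨e, (mem_filter.1 he).1, (mem_filter.1 he).2⟩
    obtain ⟨h_eq, h_le⟩ := eq_two_pow_sub_of_mul_two_pow_eq (a := #T) (b := n) (by
      rw [← card_image_incidenceParity_of_exists_fixed hconn hinv hfree hfix hT, h_count])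
    rw [h_eq]
    congr 1
    omega
end

section
/- Let K be a finite connected simple graph with V vertices and E edges, and let K □ K be the Cartesian (box) product of K with itself. Let s be the automorphism of K □ K swapping the two coordinates, i.e., s(x,y) = (y,x). Then the number of s-symmetric 1-cycles in K □ K equals 2^{VE - V(V-1)/2}. -/
open Finset

lemma ite_eq_one_zmod_two (t : ZMod 2) : (if t = 1 then 1 else 0 : ZMod 2) = t := by
  fin_cases t <;> rfl

section

variable {V R : Type*} [CommSemiring R]

def symmetrizeOffDiag : (V → V → R) →ₗ[R] {z : Sym2 V // ¬ z.IsDiag} → R where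
  toFun M z := Sym2.lift ⟨fun x y => M x y + M y x, fun _ _ => add_comm _ _⟩ z.1
  map_add' M N := by
    ext ⟨z, -⟩
    induction z using Sym2.ind
    simp only [Sym2.lift_mk, Pi.add_apply]
    ring
  map_smul' c M := by
    ext ⟨z, -⟩
    induction z using Sym2.ind
    simp [mul_add]

@[simp] lemma symmetrizeOffDiag_mk (M : V → V → R) (x y : V) (h : ¬ s(x, y).IsDiag) :
    symmetrizeOffDiag M ⟨s(x, y), h⟩ = M x y + M y x := Sym2.lift_mk _ _ _

lemma symmetrizeOffDiag_single [DecidableEq V] {x y : V} (h : x ≠ y) :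
    symmetrizeOffDiag (Pi.single x (Pi.single x 1 + Pi.single y 1) : V → V → R) =
      Pi.single ⟨s(x, y), by simpa⟩ 1 := by
  ext ⟨z, hz⟩
  induction z using Sym2.ind with | _ u v =>
  have huv : u ≠ v := by simpa using hz
  rw [symmetrizeOffDiag_mk]
  simp only [Pi.single_apply, Subtype.mk.injEq, Sym2.eq_iff]
  by_cases hu : u = x <;> by_cases hv : v = x <;> simp_all [Pi.single_apply, eq_comm]

end

namespace SimpleGraph

section

variable {α β : Type*}

def horizEdge (a : α) (e : Sym2 β) : Sym2 (α × β) := e.map (Prod.mk a)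

def vertEdge (b : β) (e : Sym2 α) : Sym2 (α × β) := (horizEdge b e).map Prod.swap

@[simp] lemma mem_horizEdge {a x : α} {y : β} {e : Sym2 β} :
    (x, y) ∈ horizEdge a e ↔ x = a ∧ y ∈ e := by
  simp [horizEdge, Sym2.mem_map, and_comm, eq_comm]

lemma map_swap_vertEdge (b : β) (e : Sym2 α) : (vertEdge b e).map Prod.swap = horizEdge b e := by
  simp [vertEdge, Sym2.map_map]

lemma horizEdge_inj {a a' : α} {e e' : Sym2 β} :
    horizEdge a e = horizEdge a' e' ↔ a = a' ∧ e = e' := by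
  refine ⟨fun h => ?_, by rintro ⟨rfl, rfl⟩; rfl⟩
  induction e using Sym2.ind with | _ b c =>
  induction e' using Sym2.ind with | _ b' c' =>
  simp only [horizEdge, Sym2.map_mk, Sym2.eq_iff, Prod.mk.injEq] at h
  rcases h with ⟨⟨rfl, rfl⟩, -, rfl⟩ | ⟨⟨rfl, rfl⟩, -, rfl⟩ <;> simp [Sym2.eq_swap]

lemma horizEdge_ne_vertEdge {a : α} {b : β} {e : Sym2 β} {e' : Sym2 α} (he : ¬ e.IsDiag) :
    horizEdge a e ≠ vertEdge b e' := by
  induction e using Sym2.ind with | _ c d =>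
  induction e' using Sym2.ind with | _ c' d' =>
  intro h
  simp only [horizEdge, vertEdge, Sym2.map_mk, Prod.swap_prod_mk, Sym2.eq_iff,
    Prod.mk.injEq] at h
  rcases h with ⟨⟨-, rfl⟩, -, h⟩ | ⟨⟨-, rfl⟩, -, h⟩ <;> exact he (by simp [h])

variable {G : SimpleGraph α} {H : SimpleGraph β}

@[simp] lemma horizEdge_mem_edgeSet_boxProd {a : α} {e : Sym2 β} :
    horizEdge a e ∈ (G □ H).edgeSet ↔ e ∈ H.edgeSet := by
  induction e using Sym2.ind with | _ b c =>
  simp [horizEdge]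

@[simp] lemma vertEdge_mem_edgeSet_boxProd {b : β} {e : Sym2 α} :
    vertEdge b e ∈ (G □ H).edgeSet ↔ e ∈ G.edgeSet := by
  induction e using Sym2.ind with | _ a c =>
  simp [vertEdge, horizEdge]

lemma exists_eq_horizEdge_or_vertEdge_of_mem_edgeSet_boxProd {d : Sym2 (α × β)}
    (hd : d ∈ (G □ H).edgeSet) :
    (∃ a, ∃ e ∈ H.edgeSet, d = horizEdge a e) ∨
      ∃ b, ∃ e ∈ G.edgeSet, d = vertEdge b e := by
  induction d using Sym2.ind with | _ z w =>
  obtain ⟨a, b⟩ := z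
  obtain ⟨a', b'⟩ := w
  rw [mem_edgeSet, boxProd_adj] at hd
  rcases hd with ⟨h, rfl : b = b'⟩ | ⟨h, rfl : a = a'⟩
  · exact .inr ⟨b, s(a, a'), h, by simp [vertEdge, horizEdge]⟩
  · exact .inl ⟨a, s(b, b'), h, by simp [horizEdge]⟩

end

section

variable {V : Type*} [DecidableEq V] (G : SimpleGraph V) [Fintype G.edgeSet]

def boundary : (G.edgeSet → ZMod 2) →ₗ[ZMod 2] V → ZMod 2 :=
  Matrix.mulVecLin (Matrix.of fun v (e : G.edgeSet) => if v ∈ (e : Sym2 V) then 1 else 0)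

variable {G}

lemma boundary_apply (c : G.edgeSet → ZMod 2) (v : V) :
    G.boundary c v = ∑ e : G.edgeSet, if v ∈ (e : Sym2 V) then c e else 0 := by
  simp [boundary, Matrix.mulVec, dotProduct, ite_mul]

lemma boundary_single {u w : V} (h : s(u, w) ∈ G.edgeSet) :
    G.boundary (Pi.single ⟨s(u, w), h⟩ 1) = Pi.single u 1 + Pi.single w 1 := by
  ext v
  have hne : u ≠ w := G.ne_of_adj h
  rw [boundary_apply, Fintype.sum_eq_single ⟨s(u, w), h⟩ fun e he => by simp [he]]
  by_cases hu : v = u <;> by_cases hw : v = w <;> simp_all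

lemma single_add_single_mem_range_boundary {x y : V} (h : G.Reachable x y) :
    Pi.single x 1 + Pi.single y 1 ∈ LinearMap.range G.boundary := by
  obtain ⟨W⟩ := h
  induction W with
  | nil => simp [ZModModule.add_self]
  | @cons u w y h W ih =>
    rw [← ZModModule.add_add_add_cancel _ (Pi.single w 1), ← boundary_single h]
    exact add_mem (LinearMap.mem_range_self _ _) ih

variable (G) in
def boundaryAsymmetry :
    (V → G.edgeSet → ZMod 2) →ₗ[ZMod 2] {z : Sym2 V // ¬ z.IsDiag} → ZMod 2 :=
  symmetrizeOffDiag ∘ₗ G.boundary.compLeft V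

lemma boundaryAsymmetry_surjective [Finite V] (hG : G.Preconnected) :
    Function.Surjective G.boundaryAsymmetry := by
  rw [← LinearMap.range_eq_top, eq_top_iff, ← (Pi.basisFun (ZMod 2) _).span_eq,
    Submodule.span_le]
  rintro _ ⟨⟨z, hz⟩, rfl⟩
  induction z using Sym2.ind with | _ x y =>
  obtain ⟨c, hc⟩ := single_add_single_mem_range_boundary (hG x y)
  refine ⟨Pi.single x c, ?_⟩
  have hcomp : G.boundary.compLeft V (Pi.single x c) = Pi.single x (G.boundary c) :=
    (Pi.single_op (fun _ => G.boundary) (fun _ => map_zero _) x c).symm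
  rw [Pi.basisFun_apply, boundaryAsymmetry, LinearMap.comp_apply, hcomp, hc,
    symmetrizeOffDiag_single (by simpa using hz)]

lemma finrank_ker_boundaryAsymmetry [Fintype V] (hG : G.Preconnected) :
    Module.finrank (ZMod 2) (LinearMap.ker G.boundaryAsymmetry) =
      Fintype.card V * Fintype.card G.edgeSet - (Fintype.card V).choose 2 := by
  have hrank := G.boundaryAsymmetry.finrank_range_add_finrank_ker
  rw [LinearMap.range_eq_top.mpr (boundaryAsymmetry_surjective hG), finrank_top,
    Module.finrank_fintype_fun_eq_card, Sym2.card_subtype_not_diag, Module.finrank_pi_fintype,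
    sum_const, Module.finrank_fintype_fun_eq_card, card_univ, smul_eq_mul] at hrank
  omega

end

section

variable {V : Type*} [Fintype V] [DecidableEq V] {G : SimpleGraph V} [Fintype G.edgeSet]

def rowEdges (f : V → G.edgeSet → ZMod 2) : Finset (Sym2 (V × V)) :=
  ({p : V × G.edgeSet | f p.1 p.2 = 1} : Finset _).image fun p => horizEdge p.1 p.2

def symmEdges (f : V → G.edgeSet → ZMod 2) : Finset (Sym2 (V × V)) :=
  rowEdges f ∪ (rowEdges f).image (Sym2.map Prod.swap)

lemma mem_rowEdges {f : V → G.edgeSet → ZMod 2} {d : Sym2 (V × V)} :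
    d ∈ rowEdges f ↔ ∃ a e, f a e = 1 ∧ horizEdge a ↑e = d := by
  simp [rowEdges]

lemma horizEdge_mem_rowEdges {f : V → G.edgeSet → ZMod 2} {a : V} {e : G.edgeSet} :
    horizEdge a ↑e ∈ rowEdges f ↔ f a e = 1 := by
  refine ⟨fun h => ?_, fun h => mem_rowEdges.mpr ⟨a, e, h, rfl⟩⟩
  obtain ⟨a', e', hf, he⟩ := mem_rowEdges.mp h
  obtain ⟨rfl, he'⟩ := horizEdge_inj.mp he
  obtain rfl : e' = e := Subtype.ext he'
  exact hf

lemma symmEdges_subset_edgeSet (f : V → G.edgeSet → ZMod 2) :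
    ∀ d ∈ symmEdges f, d ∈ (G □ G).edgeSet := by
  simp only [symmEdges, mem_union, mem_image]
  rintro d (hd | ⟨d, hd, rfl⟩) <;> obtain ⟨a, e, -, rfl⟩ := mem_rowEdges.mp hd
  · exact horizEdge_mem_edgeSet_boxProd.mpr e.2
  · exact vertEdge_mem_edgeSet_boxProd.mpr e.2

lemma horizEdge_notMem_image_swap_rowEdges (f : V → G.edgeSet → ZMod 2) (a : V)
    (e : G.edgeSet) :
    horizEdge a ↑e ∉ (rowEdges f).image (Sym2.map Prod.swap) := by
  rw [mem_image]
  rintro ⟨d, hd, h⟩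
  obtain ⟨b, e', -, rfl⟩ := mem_rowEdges.mp hd
  exact horizEdge_ne_vertEdge (G.not_isDiag_of_mem_edgeSet e.2) h.symm

lemma disjoint_rowEdges_image_swap (f : V → G.edgeSet → ZMod 2) :
    Disjoint (rowEdges f) ((rowEdges f).image (Sym2.map Prod.swap)) := by
  rw [Finset.disjoint_left]
  rintro _ hd
  obtain ⟨a, e, -, rfl⟩ := mem_rowEdges.mp hd
  exact horizEdge_notMem_image_swap_rowEdges f a e

lemma natCast_card_filter_mem_rowEdges (f : V → G.edgeSet → ZMod 2) (x y : V) :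
    (#{d ∈ rowEdges f | (x, y) ∈ d} : ZMod 2) = G.boundary (f x) y := by
  have hinj : Function.Injective fun p : V × G.edgeSet => horizEdge p.1 (p.2 : Sym2 V) :=
    fun p q h => Prod.ext (horizEdge_inj.mp h).1 (Subtype.ext (horizEdge_inj.mp h).2)
  rw [rowEdges, filter_image, card_image_of_injective _ hinj, filter_filter, natCast_card_filter,
    Fintype.sum_prod_type, boundary_apply]
  simp only [mem_horizEdge, ite_and]
  rw [Fintype.sum_eq_single x fun a ha => sum_eq_zero fun e _ => by simp [Ne.symm ha]]
  refine sum_congr rfl fun e _ => ?_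
  by_cases hy : y ∈ (e : Sym2 V) <;> simp [hy, ite_eq_one_zmod_two]

lemma card_filter_mem_symmEdges (f : V → G.edgeSet → ZMod 2) (x y : V) :
    #{d ∈ symmEdges f | (x, y) ∈ d} =
      #{d ∈ rowEdges f | (x, y) ∈ d} + #{d ∈ rowEdges f | (y, x) ∈ d} := by
  rw [symmEdges, filter_union, card_union_of_disjoint
    (disjoint_filter_filter (disjoint_rowEdges_image_swap f)), filter_image,
    card_image_of_injective _ (Sym2.map.injective Prod.swap_injective)]
  congr 2
  ext d
  simp

lemma image_swap_symmEdges (f : V → G.edgeSet → ZMod 2) :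
    (symmEdges f).image (Sym2.map Prod.swap) = symmEdges f := by
  have hswap : Sym2.map Prod.swap ∘ Sym2.map Prod.swap = (id : Sym2 (V × V) → _) := by
    funext d
    simp [Sym2.map_map]
  rw [symmEdges, image_union, image_image, hswap, image_id, union_comm]

lemma isOneCycle_symmEdges_iff {f : V → G.edgeSet → ZMod 2} :
    IsOneCycle (G □ G) (symmEdges f) ↔ G.boundaryAsymmetry f = 0 := by
  have hpar (x y : V) : (#{d ∈ symmEdges f | (x, y) ∈ d} : ZMod 2) =
      G.boundary (f x) y + G.boundary (f y) x := by
    rw [card_filter_mem_symmEdges, Nat.cast_add, natCast_card_filter_mem_rowEdges,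
      natCast_card_filter_mem_rowEdges]
  rw [IsOneCycle, and_iff_right (symmEdges_subset_edgeSet f)]
  simp only [← ZMod.natCast_eq_zero_iff_even, Prod.forall, hpar]
  constructor
  · intro h
    ext ⟨z, hz⟩
    induction z using Sym2.ind with | _ x y =>
    exact h x y
  · intro h x y
    by_cases hxy : x = y
    · subst hxy
      exact ZModModule.add_self _
    · exact congrFun h ⟨s(x, y), by simpa⟩

variable (G) in
def rowIndicator (C : Finset (Sym2 (V × V))) : V → G.edgeSet → ZMod 2 :=
  fun a e => if horizEdge a ↑e ∈ C then 1 else 0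

lemma rowIndicator_symmEdges (f : V → G.edgeSet → ZMod 2) :
    G.rowIndicator (symmEdges f) = f := by
  funext a e
  have hmem : horizEdge a ↑e ∈ symmEdges f ↔ f a e = 1 := by
    rw [symmEdges, mem_union, or_iff_left (horizEdge_notMem_image_swap_rowEdges f a e),
      horizEdge_mem_rowEdges]
  simp only [rowIndicator, hmem, ite_eq_one_zmod_two]

lemma symmEdges_rowIndicator {C : Finset (Sym2 (V × V))}
    (hC : ∀ d ∈ C, d ∈ (G □ G).edgeSet) (hs : C.image (Sym2.map Prod.swap) = C) :
    symmEdges (G.rowIndicator C) = C := by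
  have hrow {a : V} {e : G.edgeSet} :
      horizEdge a ↑e ∈ rowEdges (G.rowIndicator C) ↔ horizEdge a ↑e ∈ C := by
    rw [horizEdge_mem_rowEdges, rowIndicator]
    split_ifs with h <;> simp [h]
  have hswap {d : Sym2 (V × V)} (hd : d ∈ C) : d.map Prod.swap ∈ C :=
    hs ▸ mem_image_of_mem _ hd
  ext d
  constructor
  · rw [symmEdges, mem_union, mem_image]
    rintro (hd | ⟨d, hd, rfl⟩) <;> obtain ⟨a, e, -, rfl⟩ := mem_rowEdges.mp hd
    · exact hrow.mp hd
    · exact hswap (hrow.mp hd)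
  · intro hd
    rcases exists_eq_horizEdge_or_vertEdge_of_mem_edgeSet_boxProd (hC d hd) with
      ⟨a, e, he, rfl⟩ | ⟨b, e, he, rfl⟩
    · exact mem_union_left _ (hrow (e := ⟨e, he⟩) |>.mpr hd)
    · refine mem_union_right _ (mem_image.mpr ⟨horizEdge b e, ?_, rfl⟩)
      exact hrow (e := ⟨e, he⟩) |>.mpr (by simpa only [map_swap_vertEdge] using hswap hd)

variable (G) in
def symmOneCyclesEquivKer :
    {C : Finset (Sym2 (V × V)) // IsOneCycle (G □ G) C ∧ C.image (Sym2.map Prod.swap) = C} ≃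
      LinearMap.ker G.boundaryAsymmetry where
  toFun C := ⟨G.rowIndicator C, by
    rw [LinearMap.mem_ker, ← isOneCycle_symmEdges_iff, symmEdges_rowIndicator C.2.1.1 C.2.2]
    exact C.2.1⟩
  invFun f :=
    ⟨symmEdges f.1, (isOneCycle_symmEdges_iff (f := f.1)).mpr f.2, image_swap_symmEdges f.1⟩
  left_inv C := by
    apply Subtype.ext
    exact symmEdges_rowIndicator C.2.1.1 C.2.2
  right_inv f := by
    apply Subtype.ext
    exact rowIndicator_symmEdges f.1

end

end SimpleGraph

/-- For a finite connected simple graph `K` with `V` vertices and `E` edges, the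
number of 1-cycles in the box product `K □ K` which are symmetric with respect to the
coordinate-swapping automorphism equals `2 ^ (V*E - V*(V-1)/2)`. -/
theorem card_symmetric_oneCycles_boxProd {V : Type*} [Fintype V] [DecidableEq V]
    (G : SimpleGraph V) [DecidableRel G.Adj] (hconn : G.Connected) :
    Nat.card {C : Finset (Sym2 (V × V)) // IsOneCycle (G.boxProd G) C ∧
        C.image (Sym2.map Prod.swap) = C}
      = 2 ^ (Fintype.card V * G.edgeFinset.card
          - Fintype.card V * (Fintype.card V - 1) / 2) := by
  rw [Nat.card_congr G.symmOneCyclesEquivKer, Module.natCard_eq_pow_finrank (K := ZMod 2),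
    Nat.card_zmod, SimpleGraph.finrank_ker_boundaryAsymmetry hconn.preconnected,
    SimpleGraph.edgeFinset_card, Nat.choose_two_right]
end

section
/- The number of 2-cycles on the set {1,...,n} equals 2^{C(n-1,3)}, where C(n-1,3) is the binomial coefficient (n-1 choose 3). -/
/-!
Fix a vertex `v`. In a 2-cycle `C`, the members through a pair `p` not containing `v` are the
members of `T = {f ∈ C | v ∉ f}` through `p` and possibly `p ∪ {v}`, so `p ∪ {v} ∈ C` exactly
when `p` lies in an odd number of members of `T`; thus `C` is determined by `T`. Conversely,
every family `T` of triples avoiding `v` extends in this way to a 2-cycle, its cone: the pairs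
`{v, a}` are then covered as often as there are odd pairs through `a`, and modulo 2 this number
is `∑_{t ∈ T} #{pairs of t through a}`, a sum of 0s and 2s. Hence 2-cycles correspond to
arbitrary sets of triples of the remaining `n - 1` vertices.
-/

/-- A 2-cycle on `{1,...,n}` is a set `C` of 3-element subsets of `{1,...,n}` such that
every 2-element subset is contained in an even number of members of `C`. -/
def IsTwoCycle (n : ℕ) (C : Finset (Finset (Fin n))) : Prop :=
  (∀ f ∈ C, f.card = 3) ∧
  ∀ p : Finset (Fin n), p.card = 2 → Even (C.filter (fun f => p ⊆ f)).card

open Finset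

section

variable {α : Type*} [DecidableEq α]

theorem Finset.even_card_filter_singleton_subset_powersetCard_two {t : Finset α} (ht : #t = 3)
    (a : α) :
    Even #{p ∈ t.powersetCard 2 | {a} ⊆ p} := by
  by_cases hat : a ∈ t
  · rw [card_filter_powersetCard_subset _ _ _ (singleton_subset_iff.2 hat) (by simp), ht,
      card_singleton]
    decide
  · rw [filter_false_of_mem fun p hp hap =>
      hat ((mem_powersetCard.1 hp).1 (hap (mem_singleton_self a)))]
    simp

def codegree (C : Finset (Finset α)) (p : Finset α) : ℕ := #{f ∈ C | p ⊆ f}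

def IsTwoCycleOn (C : Finset (Finset α)) : Prop :=
  (∀ f ∈ C, #f = 3) ∧ ∀ p : Finset α, #p = 2 → Even (codegree C p)

namespace TwoCycle

theorem codegree_eq_codegree_filter_notMem_add {C : Finset (Finset α)} (hC : ∀ f ∈ C, #f = 3)
    {v : α} {p : Finset α} (hp : #p = 2) (hvp : v ∉ p) :
    codegree C p = codegree {f ∈ C | v ∉ f} p + if insert v p ∈ C then 1 else 0 := by
  have hthrough : {f ∈ C | p ⊆ f ∧ v ∈ f} = {f ∈ C | f = insert v p} := by
    refine filter_congr fun f hf => ⟨fun ⟨hpf, hvf⟩ => ?_, ?_⟩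
    · refine (eq_of_subset_of_card_le (insert_subset hvf hpf) ?_).symm
      rw [card_insert_of_notMem hvp, hp, hC f hf]
    · rintro rfl
      exact ⟨subset_insert v p, mem_insert_self v p⟩
  rw [codegree, codegree, ← card_filter_add_card_filter_not (p := (v ∈ ·)), filter_filter,
    filter_filter, filter_filter, hthrough, filter_eq', add_comm]
  simp only [and_comm]
  split_ifs <;> simp

theorem insert_mem_iff_odd_codegree {C : Finset (Finset α)} (hC : IsTwoCycleOn C) {v : α}
    {p : Finset α} (hp : #p = 2) (hvp : v ∉ p) :
    insert v p ∈ C ↔ Odd (codegree {f ∈ C | v ∉ f} p) := by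
  have := hC.2 p hp
  rw [codegree_eq_codegree_filter_notMem_add hC.1 hp hvp] at this
  split_ifs at this with h <;> simp_all [Nat.even_add_one]

variable [Fintype α]

def oddPairs (T : Finset (Finset α)) : Finset (Finset α) :=
  {p ∈ univ.powersetCard 2 | Odd (codegree T p)}

theorem mem_oddPairs {T : Finset (Finset α)} {p : Finset α} :
    p ∈ oddPairs T ↔ #p = 2 ∧ Odd (codegree T p) := by
  simp [oddPairs]

theorem even_card_filter_mem_oddPairs {T : Finset (Finset α)} (hT : ∀ t ∈ T, #t = 3) (a : α) :
    Even #{p ∈ oddPairs T | a ∈ p} := by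
  set P : Finset (Finset α) := {p ∈ univ.powersetCard 2 | {a} ⊆ p}
  have hbelow :
      ∀ t ∈ T, P.bipartiteBelow (· ⊆ ·) t = {p ∈ t.powersetCard 2 | {a} ⊆ p} := by
    intro t _
    ext p
    simp only [P, mem_bipartiteBelow, mem_filter, mem_powersetCard, subset_univ, true_and]
    tauto
  have hsum : Even (∑ p ∈ P, codegree T p) := by
    rw [show ∑ p ∈ P, codegree T p = ∑ p ∈ P, #(T.bipartiteAbove (· ⊆ ·) p) from rfl,
      sum_card_bipartiteAbove_eq_sum_card_bipartiteBelow]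
    exact even_sum _ fun t ht =>
      hbelow t ht ▸ even_card_filter_singleton_subset_powersetCard_two (hT t ht) a
  rw [even_sum_iff_even_card_odd] at hsum
  convert hsum using 2
  ext p
  simp only [P, oddPairs, mem_filter, singleton_subset_iff]
  tauto

theorem notMem_of_mem_oddPairs {T : Finset (Finset α)} {v : α} (hT : ∀ t ∈ T, v ∉ t)
    {p : Finset α} (hp : p ∈ oddPairs T) : v ∉ p := by
  intro hvp
  have hzero : codegree T p = 0 :=
    card_eq_zero.2 (filter_false_of_mem fun t ht hpt => hT t ht (hpt hvp))
  exact Nat.not_odd_zero (hzero ▸ (mem_oddPairs.1 hp).2)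

def cone (v : α) (T : Finset (Finset α)) : Finset (Finset α) :=
  T ∪ (oddPairs T).image (insert v)

variable {T : Finset (Finset α)} {v : α}

theorem filter_notMem_cone (hT : ∀ t ∈ T, v ∉ t) : {f ∈ cone v T | v ∉ f} = T := by
  ext f
  simp only [cone, mem_filter, mem_union, mem_image]
  constructor
  · rintro ⟨hf | ⟨p, -, rfl⟩, hvf⟩
    · exact hf
    · exact absurd (mem_insert_self v p) hvf
  · exact fun hf => ⟨.inl hf, hT f hf⟩

theorem insert_mem_cone_iff (hT : ∀ t ∈ T, v ∉ t) {p : Finset α} (hvp : v ∉ p) :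
    insert v p ∈ cone v T ↔ p ∈ oddPairs T := by
  simp only [cone, mem_union, mem_image]
  constructor
  · rintro (hT' | ⟨q, hq, hqp⟩)
    · exact absurd (mem_insert_self v p) (hT _ hT')
    · rwa [← erase_insert (notMem_of_mem_oddPairs hT hq), hqp, erase_insert hvp] at hq
  · exact fun hp => .inr ⟨p, hp, rfl⟩

theorem codegree_cone_pair (hT : ∀ t ∈ T, v ∉ t) {a : α} (hav : a ≠ v) :
    codegree (cone v T) {v, a} = #{p ∈ oddPairs T | a ∈ p} := by
  have hinj : Set.InjOn (insert v) (oddPairs T : Set (Finset α)) := by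
    intro p hp q hq hpq
    rw [← erase_insert (notMem_of_mem_oddPairs hT hp),
      ← erase_insert (notMem_of_mem_oddPairs hT hq), hpq]
  have hsub : ∀ p ∈ oddPairs T, {v, a} ⊆ insert v p ↔ a ∈ p := fun p _ => by
    simp [insert_subset_iff, hav]
  rw [codegree, cone, filter_union, filter_false_of_mem fun t ht hvt => hT t ht (hvt (by simp)),
    empty_union, filter_image, filter_congr hsub,
    card_image_of_injOn (hinj.mono (coe_subset.2 (filter_subset _ _)))]

theorem isTwoCycleOn_cone (hT : ∀ t ∈ T, #t = 3 ∧ v ∉ t) : IsTwoCycleOn (cone v T) := by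
  have hTv : ∀ t ∈ T, v ∉ t := fun t ht => (hT t ht).2
  have hcard : ∀ f ∈ cone v T, #f = 3 := by
    simp only [cone, mem_union, mem_image]
    rintro f (hf | ⟨p, hp, rfl⟩)
    · exact (hT f hf).1
    · rw [card_insert_of_notMem (notMem_of_mem_oddPairs hTv hp), (mem_oddPairs.1 hp).1]
  refine ⟨hcard, fun q hq => ?_⟩
  by_cases hvq : v ∈ q
  · obtain ⟨a, hav, rfl⟩ : ∃ a, a ≠ v ∧ q = {v, a} := by
      obtain ⟨x, y, hxy, rfl⟩ := card_eq_two.1 hq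
      rcases mem_insert.1 hvq with rfl | hvy
      · exact ⟨y, hxy.symm, rfl⟩
      · exact ⟨x, by rwa [mem_singleton.1 hvy], by rw [mem_singleton.1 hvy, pair_comm]⟩
    rw [codegree_cone_pair hTv hav]
    exact even_card_filter_mem_oddPairs (fun t ht => (hT t ht).1) a
  · rw [codegree_eq_codegree_filter_notMem_add hcard hq hvq, filter_notMem_cone hTv]
    simp only [insert_mem_cone_iff hTv hvq, mem_oddPairs, hq, true_and]
    split_ifs with hodd
    · exact hodd.add_one
    · simpa using Nat.not_odd_iff_even.1 hodd

theorem cone_filter_notMem {C : Finset (Finset α)} (hC : IsTwoCycleOn C) (v : α) :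
    cone v {f ∈ C | v ∉ f} = C := by
  have hT : ∀ t ∈ {f ∈ C | v ∉ f}, #t = 3 ∧ v ∉ t := fun t ht =>
    ⟨hC.1 t (mem_filter.1 ht).1, (mem_filter.1 ht).2⟩
  have hTv : ∀ t ∈ {f ∈ C | v ∉ f}, v ∉ t := fun t ht => (hT t ht).2
  ext f
  by_cases hvf : v ∈ f
  · have hvp : v ∉ f.erase v := notMem_erase v f
    rw [← insert_erase hvf]
    by_cases hp : #(f.erase v) = 2
    · rw [insert_mem_cone_iff hTv hvp, insert_mem_iff_odd_codegree hC hp hvp, mem_oddPairs]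
      exact and_iff_right hp
    · have hcard : #(insert v (f.erase v)) ≠ 3 := by rw [card_insert_of_notMem hvp]; omega
      exact iff_of_false (fun h => hcard ((isTwoCycleOn_cone hT).1 _ h))
        (fun h => hcard (hC.1 _ h))
  · simpa [hvf] using congrArg (f ∈ ·) (filter_notMem_cone hTv)

theorem mem_powerset_powersetCard_erase_univ {k : ℕ} :
    T ∈ ((univ.erase v).powersetCard k).powerset ↔ ∀ t ∈ T, #t = k ∧ v ∉ t := by
  simp [subset_iff, mem_powersetCard, and_comm]

def equivPowersetTriplesAvoiding (v : α) :
    {C : Finset (Finset α) // IsTwoCycleOn C} ≃ ((univ.erase v).powersetCard 3).powerset where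
  toFun C := ⟨{f ∈ C.1 | v ∉ f}, mem_powerset_powersetCard_erase_univ.2 fun t ht =>
    ⟨C.2.1 t (mem_filter.1 ht).1, (mem_filter.1 ht).2⟩⟩
  invFun T := ⟨cone v T, isTwoCycleOn_cone (mem_powerset_powersetCard_erase_univ.1 T.2)⟩
  left_inv C := Subtype.ext (cone_filter_notMem C.2 v)
  right_inv T := Subtype.ext
    (filter_notMem_cone fun t ht => (mem_powerset_powersetCard_erase_univ.1 T.2 t ht).2)

end TwoCycle

open TwoCycle in
theorem card_isTwoCycleOn [Fintype α] :
    Nat.card {C : Finset (Finset α) // IsTwoCycleOn C} = 2 ^ (Fintype.card α - 1).choose 3 := by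
  rcases isEmpty_or_nonempty α with hα | ⟨⟨v⟩⟩
  · rw [Fintype.card_eq_zero, Nat.zero_sub, Nat.choose_zero_succ, pow_zero,
      Nat.card_eq_one_iff_exists]
    refine ⟨⟨∅, by simp [IsTwoCycleOn, codegree]⟩, fun C => Subtype.ext ?_⟩
    refine eq_empty_of_forall_notMem fun f hf => ?_
    simpa [eq_empty_of_isEmpty f] using C.2.1 f hf
  · rw [Nat.card_congr (equivPowersetTriplesAvoiding v), Nat.card_eq_fintype_card,
      Fintype.card_coe, card_powerset, card_powersetCard, card_erase_of_mem (mem_univ v), card_univ]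

end

/-- The number of 2-cycles on `{1,...,n}` equals `2 ^ (n-1 choose 3)`. -/
theorem card_twoCycles (n : ℕ) :
    Nat.card {C : Finset (Finset (Fin n)) // IsTwoCycle n C}
      = 2 ^ Nat.choose (n - 1) 3 := by
  have h := card_isTwoCycleOn (α := Fin n)
  rw [Fintype.card_fin] at h
  -- `IsTwoCycle n` is `IsTwoCycleOn` on `Fin n` by unfolding
  exact h
end

section
/- Every rook cycle in [n]^ℓ is a symmetric-difference sum of finitely many parallelepipeds. -/
/-!
Order `[n]^ℓ` pointwise and let `x` be a maximal point of a nonempty rook cycle `C`. For each `i`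
the row through `x` in direction `i` meets `C` in a second point, which by maximality lies below
`x`; so `x` is the top corner of a parallelepiped `Q` with sides `{aᵢ, xᵢ}`, `aᵢ < xᵢ`. Since
parallelepipeds are rook cycles, `C ∆ Q` is again a rook cycle, and it is smaller than `C` in the
colex order because the top of `Q` lies in `C`. Induction on the colex order finishes the proof.
-/

/-- A rook cycle in `[n]^ℓ` is a subset containing an even number of points of every
row, where a row is obtained by fixing all coordinates except one. -/
def IsRookCycle (n ℓ : ℕ) (C : Finset (Fin ℓ → Fin n)) : Prop :=
  ∀ (i : Fin ℓ) (x : Fin ℓ → Fin n),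
    Even (C.filter (fun y => ∀ j, j ≠ i → y j = x j)).card

open Finset Function

namespace Finset

variable {α : Type*} [DecidableEq α]

lemma filter_symmDiff_s14 (p : α → Prop) [DecidablePred p] (s t : Finset α) :
    (symmDiff s t).filter p = symmDiff (s.filter p) (t.filter p) := by
  ext a
  simp only [mem_filter, mem_symmDiff]
  tauto

lemma card_symmDiff_add_two_mul_card_inter (s t : Finset α) :
    #(symmDiff s t) + 2 * #(s ∩ t) = #s + #t := by
  have hsub := card_sdiff_add_card_eq_card (inter_subset_union (s := s) (t := t))
  rw [symmDiff_eq_sup_sdiff_inf]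
  have := card_union_add_card_inter s t
  simp only [sup_eq_union, inf_eq_inter] at hsub ⊢
  omega

lemma even_card_symmDiff_s14 {s t : Finset α} (hs : Even #s) (ht : Even #t) :
    Even #(symmDiff s t) := by
  have h : Even (#(symmDiff s t) + 2 * #(s ∩ t)) := by
    rw [card_symmDiff_add_two_mul_card_inter]
    exact hs.add ht
  simpa [Nat.even_add, even_two_mul] using h

lemma Colex.toColex_symmDiff_lt_toColex [PartialOrder α] {s t : Finset α} {a : α}
    (has : a ∈ s) (hat : a ∈ t) (ht : ∀ b ∈ t, b ≤ a) :
    toColex (symmDiff s t) < toColex s := by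
  rw [Colex.toColex_lt_toColex]
  refine ⟨fun h => ?_, fun b hb hbs => ⟨a, has, ?_, ht b ?_⟩⟩
  · simp [symmDiff_eq_left.1 h] at hat
  · simp [mem_symmDiff, has, hat]
  · simp_all [mem_symmDiff]

theorem exists_list_eq_foldr_symmDiff [PartialOrder α] [Finite α] {ι : Type*}
    (g : ι → Finset α) (G : ι → Prop) (p : Finset α → Prop)
    (h : ∀ s, p s → s.Nonempty →
      ∃ i, G i ∧ p (symmDiff s (g i)) ∧ ∃ a ∈ s, a ∈ g i ∧ ∀ b ∈ g i, b ≤ a)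
    (s : Finset α) (hs : p s) :
    ∃ l : List ι, (∀ i ∈ l, G i) ∧ s = (l.map g).foldr symmDiff ∅ := by
  have : Finite (Colex (Finset α)) := .of_equiv _ toColex
  induction hc : toColex s using WellFoundedLT.induction generalizing s with
  | ind c ih =>
  subst hc
  obtain rfl | hne := s.eq_empty_or_nonempty
  · exact ⟨[], by simp, rfl⟩
  obtain ⟨i, hi, hps, a, has, hai, htop⟩ := h s hs hne
  obtain ⟨l, hl, hsl⟩ := ih _ (Colex.toColex_symmDiff_lt_toColex has hai htop) _ hps rfl
  refine ⟨i :: l, List.forall_mem_cons.2 ⟨hi, hl⟩, ?_⟩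
  rw [List.map_cons, List.foldr_cons, ← hsl, symmDiff_comm, symmDiff_symmDiff_cancel_right]

end Finset

section RookCycle

variable {n ℓ : ℕ} {A B C : Finset (Fin ℓ → Fin n)}

protected lemma IsRookCycle.symmDiff (hA : IsRookCycle n ℓ A) (hB : IsRookCycle n ℓ B) :
    IsRookCycle n ℓ (symmDiff A B) := fun i x => by
  rw [filter_symmDiff_s14]
  exact even_card_symmDiff_s14 (hA i x) (hB i x)

lemma isRookCycle_piFinset {P : Fin ℓ → Finset (Fin n)} (hP : ∀ i, Even #(P i)) :
    IsRookCycle n ℓ (Fintype.piFinset P) := by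
  intro i x
  have hrow : (Fintype.piFinset P).filter (fun y => ∀ j, j ≠ i → y j = x j) =
      Fintype.piFinset (update (fun j => (P j).filter (· = x j)) i (P i)) := by
    ext y
    simp only [mem_filter, Fintype.mem_piFinset]
    refine ⟨fun ⟨hyP, hyx⟩ j => ?_, fun hy => ⟨fun j => ?_, fun j hj => ?_⟩⟩
    · rcases eq_or_ne j i with rfl | hj
      · simpa using hyP j
      · simpa [hj] using ⟨hyP j, hyx j hj⟩
    · rcases eq_or_ne j i with rfl | hj
      · simpa using hy j
      · exact (by simpa [hj] using hy j : y j ∈ P j ∧ y j = x j).1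
    · exact (by simpa [hj] using hy j : y j ∈ P j ∧ y j = x j).2
  rw [hrow, Fintype.card_piFinset, even_iff_two_dvd]
  exact (even_iff_two_dvd.1 (by simpa using hP i)).trans (dvd_prod_of_mem _ (mem_univ i))

lemma IsRookCycle.exists_lt_of_maximal (hC : IsRookCycle n ℓ C) {x : Fin ℓ → Fin n}
    (hx : Maximal (· ∈ C) x) (i : Fin ℓ) : ∃ a, a < x i := by
  have hrow : 1 < #(C.filter fun y => ∀ j, j ≠ i → y j = x j) := by
    have hpos : 0 < #(C.filter fun y => ∀ j, j ≠ i → y j = x j) :=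
      card_pos.2 ⟨x, mem_filter.2 ⟨hx.prop, fun _ _ => rfl⟩⟩
    obtain ⟨k, hk⟩ := hC i x
    omega
  obtain ⟨z, hz, hzx⟩ := exists_mem_ne hrow x
  rw [mem_filter] at hz
  refine ⟨z i, lt_of_not_ge fun hle => hzx ?_⟩
  have hxz : x ≤ z := fun j => by
    rcases eq_or_ne j i with rfl | hj
    · exact hle
    · exact (hz.2 j hj).ge
  exact (hx.eq_of_le hz.1 hxz).symm

lemma IsRookCycle.exists_parallelepiped_top_mem (hC : IsRookCycle n ℓ C) (hne : C.Nonempty) :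
    ∃ P : Fin ℓ → Finset (Fin n), (∀ i, #(P i) = 2) ∧
      ∃ x ∈ C, x ∈ Fintype.piFinset P ∧ ∀ y ∈ Fintype.piFinset P, y ≤ x := by
  obtain ⟨x, hx⟩ := C.exists_maximal hne
  choose a ha using hC.exists_lt_of_maximal hx
  refine ⟨fun i => {a i, x i}, fun i => card_pair (ha i).ne, x, hx.prop, by simp, fun y hy i => ?_⟩
  have hyi := Fintype.mem_piFinset.1 hy i
  rw [mem_insert, mem_singleton] at hyi
  rcases hyi with h | h <;> simp [h, (ha i).le]

end RookCycle

/-- Every rook cycle in `[n]^ℓ` is a symmetric-difference sum of finitely many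
parallelepipeds `P₁ × ... × P_ℓ` with each `Pᵢ` a 2-element subset of `[n]`. -/
theorem isRookCycle_eq_sum_of_parallelepipeds (n ℓ : ℕ) (C : Finset (Fin ℓ → Fin n))
    (hC : IsRookCycle n ℓ C) :
    ∃ l : List (Fin ℓ → Finset (Fin n)),
      (∀ P ∈ l, ∀ i, (P i).card = 2) ∧
      C = (l.map Fintype.piFinset).foldr symmDiff ∅ := by
  refine exists_list_eq_foldr_symmDiff Fintype.piFinset (fun P => ∀ i, #(P i) = 2)
    (IsRookCycle n ℓ) (fun D hD hne => ?_) C hC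
  obtain ⟨P, hP, hPD⟩ := hD.exists_parallelepiped_top_mem hne
  exact ⟨P, hP, hD.symmDiff (isRookCycle_piFinset fun i => hP i ▸ even_two), hPD⟩
end

section
/- The number of rook cycles in [n]^ℓ equals 2^{(n-1)^ℓ}. -/
open Finset

namespace RookAux

variable {n ℓ : ℕ}

/-- indicator of a finset with values in ZMod 2 -/
def χ (C : Finset (Fin ℓ → Fin n)) (x : Fin ℓ → Fin n) : ZMod 2 :=
  if x ∈ C then 1 else 0

lemma mem_iff_of_χ {C D : Finset (Fin ℓ → Fin n)} {x : Fin ℓ → Fin n}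
    (h : χ C x = χ D x) : x ∈ C ↔ x ∈ D := by
  unfold χ at h
  by_cases hC : x ∈ C <;> by_cases hD : x ∈ D <;> simp [hC, hD] at h ⊢

lemma filter_card_eq_sum (C : Finset (Fin ℓ → Fin n)) (i : Fin ℓ) (x : Fin ℓ → Fin n) :
    ((C.filter (fun y => ∀ j, j ≠ i → y j = x j)).card : ZMod 2)
      = ∑ c : Fin n, χ C (Function.update x i c) := by
  classical
  have hinj : Function.Injective (fun c : Fin n => Function.update x i c) := by
    intro a b hab
    have := congrFun hab i
    simpa using this
  rw [show (∑ c : Fin n, χ C (Function.update x i c))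
      = ∑ y ∈ Finset.univ.image (fun c : Fin n => Function.update x i c), χ C y by
    rw [Finset.sum_image (fun a _ b _ h => hinj h)]]
  have himg : Finset.univ.image (fun c : Fin n => Function.update x i c)
      = Finset.univ.filter (fun y => ∀ j, j ≠ i → y j = x j) := by
    ext y
    simp only [mem_image, mem_filter, mem_univ, true_and]
    constructor
    · rintro ⟨c, -, rfl⟩ j hj
      simp [Function.update_of_ne hj]
    · intro h
      refine ⟨y i, ?_⟩
      funext j
      by_cases hj : j = i
      · subst hj; simp
      · simp [Function.update_of_ne hj, h _ hj]
  rw [himg]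
  unfold χ
  rw [Finset.sum_ite_mem]
  rw [Finset.sum_const, nsmul_eq_mul, mul_one]
  congr 2
  ext y
  simp [and_comm]

lemma isRookCycle_iff (C : Finset (Fin ℓ → Fin n)) :
    IsRookCycle n ℓ C ↔ ∀ (i : Fin ℓ) (x : Fin ℓ → Fin n),
      ∑ c : Fin n, χ C (Function.update x i c) = 0 := by
  unfold IsRookCycle
  refine forall₂_congr fun i x => ?_
  rw [← filter_card_eq_sum, ZMod.natCast_eq_zero_iff]
  exact even_iff_two_dvd

end RookAux

namespace RookAux
variable {m ℓ : ℕ}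

def emb (y : Fin ℓ → Fin m) : Fin ℓ → Fin (m+1) := fun j => (y j).castSucc

def wt (x : Fin ℓ → Fin (m+1)) : ℕ :=
  (Finset.univ.filter (fun j => x j = Fin.last m)).card

lemma wt_update {x : Fin ℓ → Fin (m+1)} {i : Fin ℓ} (hx : x i = Fin.last m) (c : Fin m) :
    wt (Function.update x i c.castSucc) + 1 = wt x := by
  unfold wt
  have heq : Finset.univ.filter (fun j => Function.update x i c.castSucc j = Fin.last m)
      = (Finset.univ.filter (fun j => x j = Fin.last m)).erase i := by
    ext j
    by_cases hj : j = i
    · subst hj; simp [(Fin.castSucc_lt_last c).ne]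
    · simp [Function.update_of_ne hj, hj]
  have hmem : i ∈ Finset.univ.filter (fun j => x j = Fin.last m) := by simp [hx]
  rw [heq, Finset.card_erase_of_mem hmem]
  have := Finset.card_pos.2 ⟨i, hmem⟩
  omega

lemma ext_of_restrict {C D : Finset (Fin ℓ → Fin (m+1))}
    (hC : IsRookCycle (m+1) ℓ C) (hD : IsRookCycle (m+1) ℓ D)
    (h : ∀ y : Fin ℓ → Fin m, emb y ∈ C ↔ emb y ∈ D) : C = D := by
  rw [isRookCycle_iff] at hC hD
  have main : ∀ k (x : Fin ℓ → Fin (m+1)), wt x ≤ k → χ C x = χ D x := by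
    intro k
    induction k with
    | zero =>
      intro x hx
      have h0 : ∀ j, x j ≠ Fin.last m := by
        intro j hj
        have : j ∈ Finset.univ.filter (fun j => x j = Fin.last m) := by simp [hj]
        have := Finset.card_pos.2 ⟨j, this⟩
        unfold wt at hx; omega
      have hxe : x = emb (fun j => (x j).castPred (h0 j)) := by
        funext j; simp [emb]
      rw [hxe]
      simp [χ, h _]
    | succ k ih =>
      intro x hx
      by_cases hk : wt x ≤ k
      · exact ih x hk
      have hpos : 0 < wt x := by omega
      obtain ⟨i, hi⟩ : ∃ i, x i = Fin.last m := by
        obtain ⟨i, hi⟩ := Finset.card_pos.1 hpos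
        exact ⟨i, (Finset.mem_filter.1 hi).2⟩
      have hCx := hC i x
      have hDx := hD i x
      rw [Fin.sum_univ_castSucc] at hCx hDx
      have hupd : Function.update x i (Fin.last m) = x := by
        rw [← hi]; exact Function.update_eq_self i x
      rw [hupd] at hCx hDx
      have hsum : (∑ c : Fin m, χ C (Function.update x i c.castSucc))
          = ∑ c : Fin m, χ D (Function.update x i c.castSucc) :=
        Finset.sum_congr rfl fun c _ => ih _ (by have := wt_update hi c; omega)
      rw [hsum] at hCx
      linear_combination hCx - hDx
  ext x
  exact mem_iff_of_χ (main (wt x) x le_rfl)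

end RookAux

namespace RookAux
variable {m ℓ : ℕ}

lemma exists_rookCycle (D : Finset (Fin ℓ → Fin m)) :
    ∃ C : Finset (Fin ℓ → Fin (m+1)), IsRookCycle (m+1) ℓ C ∧
      ∀ y : Fin ℓ → Fin m, (emb y ∈ C ↔ y ∈ D) := by
  classical
  set f : (Fin ℓ → Fin (m+1)) → ZMod 2 := fun x =>
    ∑ y ∈ D, if (∀ j, x j = Fin.last m ∨ (y j).castSucc = x j) then 1 else 0 with hf
  have hzmod : ∀ a : ZMod 2, a ≠ 1 → a = 0 := by decide
  set C : Finset (Fin ℓ → Fin (m+1)) := Finset.univ.filter (fun x => f x = 1) with hCdef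
  have hχ : ∀ x, χ C x = f x := by
    intro x
    by_cases hx : f x = 1
    · simp [χ, hCdef, hx]
    · simp [χ, hCdef, hx, hzmod _ hx]
  have hemb : ∀ y : Fin ℓ → Fin m, f (emb y) = if y ∈ D then 1 else 0 := by
    intro y
    have hiff : ∀ y' : Fin ℓ → Fin m,
        (∀ j, emb y j = Fin.last m ∨ (y' j).castSucc = emb y j) ↔ y' = y := by
      intro y'
      constructor
      · intro h'
        funext j
        rcases h' j with h1 | h1
        · exact absurd h1 (Fin.castSucc_lt_last (y j)).ne
        · exact Fin.castSucc_injective m h1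
      · rintro rfl j; exact Or.inr rfl
    rw [hf]
    simp only [hiff]
    exact Finset.sum_ite_eq' D y (fun _ => 1)
  refine ⟨C, ?_, fun y => ?_⟩
  · rw [isRookCycle_iff]
    intro i x
    simp only [hχ, hf]
    rw [Finset.sum_comm]
    refine Finset.sum_eq_zero fun y _ => ?_
    have hiff : ∀ c : Fin (m+1),
        (∀ j, Function.update x i c j = Fin.last m ∨ (y j).castSucc = Function.update x i c j)
          ↔ ((∀ j, j ≠ i → (x j = Fin.last m ∨ (y j).castSucc = x j))
              ∧ (c = Fin.last m ∨ (y i).castSucc = c)) := by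
      intro c
      constructor
      · intro h'
        refine ⟨fun j hj => ?_, ?_⟩
        · have := h' j; rwa [Function.update_of_ne hj] at this
        · have := h' i; rwa [Function.update_self] at this
      · rintro ⟨hA, hB⟩ j
        by_cases hj : j = i
        · subst hj; rwa [Function.update_self]
        · rw [Function.update_of_ne hj]; exact hA j hj
    simp only [hiff]
    by_cases hA : ∀ j, j ≠ i → (x j = Fin.last m ∨ (y j).castSucc = x j)
    · have hA' : ∀ c : Fin (m+1),
          ((∀ j, j ≠ i → (x j = Fin.last m ∨ (y j).castSucc = x j))
            ∧ (c = Fin.last m ∨ (y i).castSucc = c))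
          ↔ (c = Fin.last m ∨ (y i).castSucc = c) := fun c => and_iff_right hA
      simp only [hA']
      rw [Finset.sum_boole]
      have hset : (Finset.univ.filter
          (fun c : Fin (m+1) => c = Fin.last m ∨ (y i).castSucc = c))
          = {Fin.last m, (y i).castSucc} := by
        ext c
        simp [eq_comm, or_comm]
      rw [hset, Finset.card_insert_of_notMem (by simp [(Fin.castSucc_lt_last (y i)).ne']),
        Finset.card_singleton]
      decide
    · exact Finset.sum_eq_zero fun c _ => if_neg (fun hc => hA hc.1)
  · simp only [hCdef, Finset.mem_filter, Finset.mem_univ, true_and]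
    rw [hemb y]
    by_cases hy : y ∈ D <;> simp [hy]

end RookAux


/-- The number of rook cycles in `[n]^ℓ` equals `2 ^ ((n-1)^ℓ)`. -/
theorem card_rookCycles (n ℓ : ℕ) :
    Nat.card {C : Finset (Fin ℓ → Fin n) // IsRookCycle n ℓ C}
      = 2 ^ ((n - 1) ^ ℓ) := by
  classical
  match n with
  | 0 =>
    have hall : ∀ C : Finset (Fin ℓ → Fin 0), IsRookCycle 0 ℓ C := by
      intro C i x
      exact (x i).elim0
    rw [Nat.card_congr (Equiv.subtypeUnivEquiv hall), Nat.card_eq_fintype_card,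
      Fintype.card_finset, Fintype.card_fun]
    simp
  | (m+1) =>
    set F : {C : Finset (Fin ℓ → Fin (m+1)) // IsRookCycle (m+1) ℓ C}
        → Finset (Fin ℓ → Fin m) :=
      fun C => Finset.univ.filter (fun y => RookAux.emb y ∈ C.1) with hF
    have hbij : Function.Bijective F := by
      constructor
      · rintro ⟨C, hC⟩ ⟨D, hD⟩ h
        simp only [Subtype.mk.injEq]
        apply RookAux.ext_of_restrict hC hD
        intro y
        have := Finset.ext_iff.1 h y
        simpa [hF] using this
      · intro D
        obtain ⟨C, hC, hmem⟩ := RookAux.exists_rookCycle D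
        refine ⟨⟨C, hC⟩, ?_⟩
        ext y
        simp [hF, hmem]
    rw [Nat.card_eq_of_bijective F hbij, Nat.card_eq_fintype_card, Fintype.card_finset,
      Fintype.card_fun]
    simp
end

section
/- Let Z1 and Z2 be edge sets of (nonempty) simple cycles in a finite simple graph K, and let T = Z1 × Z2 ⊆ K² be the corresponding torus. Then the only cellular 2-cycles contained in T are the empty set and T itself; in particular T contains exactly one nonempty cellular 2-cycle. -/
/-- A cellular 2-cycle in `K²` is a set `C` of ordered pairs of edges of `K` such that
for every edge `σ`, both sections `{τ : (σ,τ) ∈ C}` and `{τ : (τ,σ) ∈ C}` are 1-cycles. -/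
def IsCellular2Cycle {V : Type*} [DecidableEq V] (G : SimpleGraph V)
    (C : Finset (Sym2 V × Sym2 V)) : Prop :=
  (∀ p ∈ C, p.1 ∈ G.edgeSet ∧ p.2 ∈ G.edgeSet) ∧
  ∀ σ : Sym2 V,
    IsOneCycle G ((C.filter (fun p => p.1 = σ)).image Prod.snd) ∧
    IsOneCycle G ((C.filter (fun p => p.2 = σ)).image Prod.fst)

/-! The edge set of a cycle is a minimal 1-cycle: a cycle has at most two edges at each vertex,
so an even subset containing one of two consecutive edges contains the other, and going around
the cycle it contains all of them. Hence every row and every column of a cellular 2-cycle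
`C ⊆ Z₁ × Z₂` is empty or full. If `C` is nonempty, one row is full, so every column meets `C`
and is full as well, i.e. `C = Z₁ × Z₂`. Conversely, the rows and columns of `Z₁ × Z₂` are
`∅`, `Z₁` or `Z₂`, all of which are 1-cycles. -/

theorem List.IsChain.iff_of_mem {α : Type*} {R : α → α → Prop} {P : α → Prop} {l : List α}
    (hl : l.IsChain R) (hP : ∀ a ∈ l, ∀ b ∈ l, R a b → (P a ↔ P b))
    {a b : α} (ha : a ∈ l) (hb : b ∈ l) : P a ↔ P b := by
  have hiff : l.Pairwise (fun a b => P a ↔ P b) :=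
    List.isChain_iff_pairwise.mp (hl.imp_of_mem_imp fun a b ha hb => hP a ha b hb)
  rcases eq_or_ne a b with rfl | hab
  · rfl
  · have : Std.Symm (fun a b => P a ↔ P b) := ⟨fun _ _ => Iff.symm⟩
    exact hiff.forall ha hb hab

theorem Finset.mem_image_snd_filter_fst_eq {α β : Type*} [DecidableEq α] [DecidableEq β]
    {C : Finset (α × β)} {a : α} {b : β} :
    b ∈ (C.filter (fun p => p.1 = a)).image Prod.snd ↔ (a, b) ∈ C := by
  simp

theorem Finset.mem_image_fst_filter_snd_eq {α β : Type*} [DecidableEq α] [DecidableEq β]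
    {C : Finset (α × β)} {a : α} {b : β} :
    a ∈ (C.filter (fun p => p.2 = b)).image Prod.fst ↔ (a, b) ∈ C := by
  simp

namespace SimpleGraph.Walk

variable {V : Type*} [DecidableEq V] {G : SimpleGraph V}

theorem countP_edges_add_eq_two_mul_count_support (u : V) : ∀ {a b : V} (p : G.Walk a b),
    p.edges.countP (u ∈ ·) + (if u = a then 1 else 0) + (if u = b then 1 else 0)
      = 2 * p.support.count u
  | a, _, .nil => by by_cases u = a <;> simp_all [eq_comm]
  | a, _, .cons h q => by
      have ih := countP_edges_add_eq_two_mul_count_support u q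
      have hne := h.ne
      simp only [edges_cons, support_cons, List.countP_cons, List.count_cons, Sym2.mem_iff,
        decide_eq_true_eq, beq_iff_eq] at ih ⊢
      grind

theorem IsTrail.card_filter_toFinset_edges {a b : V} {p : G.Walk a b} (hp : p.IsTrail) (u : V) :
    (p.edges.toFinset.filter (u ∈ ·)).card = p.edges.countP (u ∈ ·) := by
  rw [List.countP_eq_length_filter, ← List.toFinset_card_of_nodup (hp.edges_nodup.filter _)]
  congr 1
  ext
  simp

theorem IsCycle.card_filter_edges_le_two {v : V} {w : G.Walk v v} (hw : w.IsCycle) (u : V) :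
    (w.edges.toFinset.filter (u ∈ ·)).card ≤ 2 := by
  rw [hw.isTrail.card_filter_toFinset_edges]
  have hsum := countP_edges_add_eq_two_mul_count_support u w
  rcases eq_or_ne u v with rfl | huv
  · rw [hw.count_support] at hsum
    simp only [if_true] at hsum
    omega
  · have hcount : w.support.count u ≤ 1 := by
      rw [← w.cons_tail_support, List.count_cons_of_ne huv.symm]
      exact List.nodup_iff_count_le_one.mp hw.support_nodup u
    simp only [huv, if_false] at hsum
    omega

theorem IsCycle.mem_of_mem_of_even {v : V} {w : G.Walk v v} (hw : w.IsCycle)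
    {S : Finset (Sym2 V)} (hS : S ⊆ w.edges.toFinset)
    (heven : ∀ u : V, Even (S.filter (u ∈ ·)).card) {e₁ e₂ : Sym2 V} {u : V}
    (he₁ : e₁ ∈ S) (he₂ : e₂ ∈ w.edges) (hu₁ : u ∈ e₁) (hu₂ : u ∈ e₂) : e₂ ∈ S := by
  by_contra he₂S
  have hne : e₁ ≠ e₂ := fun h => he₂S (h ▸ he₁)
  -- the cycle has only `e₁` and `e₂` at `u`, so `S` would have the single edge `e₁` there
  have hcycle : w.edges.toFinset.filter (u ∈ ·) = {e₁, e₂} := by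
    refine (Finset.eq_of_subset_of_card_le (fun e he => ?_) ?_).symm
    · rcases Finset.mem_insert.mp he with rfl | he
      · exact Finset.mem_filter.mpr ⟨hS he₁, hu₁⟩
      · rw [Finset.mem_singleton.mp he]
        exact Finset.mem_filter.mpr ⟨List.mem_toFinset.mpr he₂, hu₂⟩
    · rw [Finset.card_pair hne]
      exact hw.card_filter_edges_le_two u
  have hsingle : S.filter (u ∈ ·) = {e₁} := by
    refine Finset.eq_singleton_iff_unique_mem.mpr ⟨Finset.mem_filter.mpr ⟨he₁, hu₁⟩, ?_⟩
    intro e he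
    have : e ∈ ({e₁, e₂} : Finset (Sym2 V)) := hcycle ▸ Finset.filter_subset_filter _ hS he
    rcases Finset.mem_insert.mp this with rfl | he'
    · rfl
    · exact absurd (Finset.mem_singleton.mp he' ▸ (Finset.mem_filter.mp he).1) he₂S
  have := heven u
  rw [hsingle, Finset.card_singleton] at this
  exact Nat.not_even_one this

theorem IsCycle.eq_empty_or_eq_of_even {v : V} {w : G.Walk v v} (hw : w.IsCycle)
    {S : Finset (Sym2 V)} (hS : S ⊆ w.edges.toFinset)
    (heven : ∀ u : V, Even (S.filter (u ∈ ·)).card) : S = ∅ ∨ S = w.edges.toFinset := by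
  rcases S.eq_empty_or_nonempty with hempty | ⟨e₀, he₀⟩
  · exact Or.inl hempty
  have hadj : ∀ d ∈ w.darts, ∀ d' ∈ w.darts, G.DartAdj d d' → (d.edge ∈ S ↔ d'.edge ∈ S) :=
    fun d hd d' hd' hdd' =>
      ⟨fun h => hw.mem_of_mem_of_even hS heven h (List.mem_map_of_mem hd')
        (Sym2.mem_mk_right _ _) (hdd' ▸ Sym2.mem_mk_left _ _),
      fun h => hw.mem_of_mem_of_even hS heven h (List.mem_map_of_mem hd)
        (hdd' ▸ Sym2.mem_mk_left _ _) (Sym2.mem_mk_right _ _)⟩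
  obtain ⟨d₀, hd₀, rfl⟩ := List.mem_map.mp (List.mem_toFinset.mp (hS he₀))
  refine Or.inr (Finset.Subset.antisymm hS fun e he => ?_)
  obtain ⟨d, hd, rfl⟩ := List.mem_map.mp (List.mem_toFinset.mp he)
  exact (w.isChain_dartAdj_darts.iff_of_mem hadj hd₀ hd).mp he₀

theorem IsCycle.isOneCycle {v : V} {w : G.Walk v v} (hw : w.IsCycle) :
    IsOneCycle G w.edges.toFinset := by
  refine ⟨fun e he => w.edges_subset_edgeSet (List.mem_toFinset.mp he), fun u => ?_⟩
  rw [hw.isTrail.card_filter_toFinset_edges]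
  exact (hw.isTrail.even_countP_edges_iff u).mpr fun h => absurd rfl h

end SimpleGraph.Walk

section CellularCycles

open Finset

variable {V : Type*} [DecidableEq V] {G : SimpleGraph V}

theorem isOneCycle_empty : IsOneCycle G ∅ :=
  ⟨by simp, by simp⟩

theorem IsOneCycle.isCellular2Cycle_product {Z₁ Z₂ : Finset (Sym2 V)} (h₁ : IsOneCycle G Z₁)
    (h₂ : IsOneCycle G Z₂) : IsCellular2Cycle G (Z₁ ×ˢ Z₂) := by
  refine ⟨fun p hp => ⟨h₁.1 _ (mem_product.mp hp).1, h₂.1 _ (mem_product.mp hp).2⟩,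
    fun σ => ⟨?_, ?_⟩⟩
  · have : ((Z₁ ×ˢ Z₂).filter (fun p => p.1 = σ)).image Prod.snd = if σ ∈ Z₁ then Z₂ else ∅ := by
      ext τ
      split_ifs <;> simp_all
    rw [this]
    split_ifs
    exacts [h₂, isOneCycle_empty]
  · have : ((Z₁ ×ˢ Z₂).filter (fun p => p.2 = σ)).image Prod.fst = if σ ∈ Z₂ then Z₁ else ∅ := by
      ext τ
      split_ifs <;> simp_all
    rw [this]
    split_ifs
    exacts [h₁, isOneCycle_empty]

theorem IsCellular2Cycle.eq_empty_or_eq_product {Z₁ Z₂ : Finset (Sym2 V)}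
    (h₁ : ∀ S ⊆ Z₁, IsOneCycle G S → S = ∅ ∨ S = Z₁)
    (h₂ : ∀ S ⊆ Z₂, IsOneCycle G S → S = ∅ ∨ S = Z₂)
    {C : Finset (Sym2 V × Sym2 V)} (hC : IsCellular2Cycle G C) (hCZ : C ⊆ Z₁ ×ˢ Z₂) :
    C = ∅ ∨ C = Z₁ ×ˢ Z₂ := by
  rcases C.eq_empty_or_nonempty with hempty | ⟨⟨σ₀, τ₀⟩, hp₀⟩
  · exact Or.inl hempty
  have hrow : (C.filter (fun p => p.1 = σ₀)).image Prod.snd = Z₂ :=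
    (h₂ _ (fun τ hτ => (mem_product.mp (hCZ (mem_image_snd_filter_fst_eq.mp hτ))).2)
      (hC.2 σ₀).1).resolve_left (ne_empty_of_mem (mem_image_snd_filter_fst_eq.mpr hp₀))
  refine Or.inr (Subset.antisymm hCZ fun ⟨σ, τ⟩ hp => ?_)
  have hσ₀τ : (σ₀, τ) ∈ C := mem_image_snd_filter_fst_eq.mp (hrow ▸ (mem_product.mp hp).2)
  have hcol : (C.filter (fun p => p.2 = τ)).image Prod.fst = Z₁ :=
    (h₁ _ (fun σ hσ => (mem_product.mp (hCZ (mem_image_fst_filter_snd_eq.mp hσ))).1)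
      (hC.2 τ).2).resolve_left (ne_empty_of_mem (mem_image_fst_filter_snd_eq.mpr hσ₀τ))
  exact mem_image_fst_filter_snd_eq.mp (hcol ▸ (mem_product.mp hp).1)

end CellularCycles

theorem cellular2Cycle_in_torus_general {V : Type*} [DecidableEq V]
    (G : SimpleGraph V) (Z₁ Z₂ : Finset (Sym2 V))
    (h₁ : ∃ (v : V) (w : G.Walk v v), w.IsCycle ∧ Z₁ = w.edges.toFinset)
    (h₂ : ∃ (v : V) (w : G.Walk v v), w.IsCycle ∧ Z₂ = w.edges.toFinset) :
    IsCellular2Cycle G (Z₁ ×ˢ Z₂) ∧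
    ∀ C : Finset (Sym2 V × Sym2 V), C ⊆ Z₁ ×ˢ Z₂ → IsCellular2Cycle G C →
      C = ∅ ∨ C = Z₁ ×ˢ Z₂ := by
  obtain ⟨v₁, w₁, hw₁, rfl⟩ := h₁
  obtain ⟨v₂, w₂, hw₂, rfl⟩ := h₂
  exact ⟨hw₁.isOneCycle.isCellular2Cycle_product hw₂.isOneCycle,
    fun C hCZ hC => hC.eq_empty_or_eq_product
      (fun S hS hSc => hw₁.eq_empty_or_eq_of_even hS hSc.2)
      (fun S hS hSc => hw₂.eq_empty_or_eq_of_even hS hSc.2) hCZ⟩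

/-- If `Z₁, Z₂` are edge sets of simple cycles in `K` and `T = Z₁ × Z₂` is the
corresponding torus in `K²`, then the only cellular 2-cycles contained in `T` are the
empty set and `T` itself (in particular, `T` contains exactly one nonempty cellular
2-cycle, namely `T`). -/
theorem cellular2Cycle_in_torus {V : Type*} [Fintype V] [DecidableEq V]
    (G : SimpleGraph V) (Z₁ Z₂ : Finset (Sym2 V))
    (h₁ : ∃ (v : V) (w : G.Walk v v), w.IsCycle ∧ Z₁ = w.edges.toFinset)
    (h₂ : ∃ (v : V) (w : G.Walk v v), w.IsCycle ∧ Z₂ = w.edges.toFinset) :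
    IsCellular2Cycle G (Z₁ ×ˢ Z₂) ∧
    ∀ C : Finset (Sym2 V × Sym2 V), C ⊆ Z₁ ×ˢ Z₂ → IsCellular2Cycle G C →
      C = ∅ ∨ C = Z₁ ×ˢ Z₂ :=
  cellular2Cycle_in_torus_general G Z₁ Z₂ h₁ h₂
end
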